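/- arXiv:math/0506156 — 5 statements merged into one kernel-verified Lean document; each statement's English description precedes it below -/
import Mathlib

section
/- Let T_i = Id^{⊗(i−1)} ⊗ T ⊗ Id^{⊗(r−i−1)} acting on V^{⊗r}. Then for every i with 1 ≤ i ≤ r−2, the braid relation T_i T_{i+1} T_i = T_{i+1} T_i T_{i+1} holds in End_K(V^{⊗r}). -/
/-!
The row of `T_i` indexed by a basis tensor `a` is supported on `a` and on `a` with the entries
at sites `i, i+1` exchanged, with coefficients depending only on those two entries. Hence both
sides of the braid relation only see the three sites `i, i+1, i+2`, and it suffices to verify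
it on `V ⊗ V ⊗ V`. There it is a case analysis over the relative order of the three indices,
driven by the Hecke relation `d² = (q - q⁻¹) d + 1` for the diagonal coefficients
`d ∈ {q, -q⁻¹}` and by `(±1)² = 1` for the signs.
-/

set_option synthInstance.maxHeartbeats 1000000
set_option maxHeartbeats 1000000

open scoped BigOperators Kronecker

section CommonDefs

variable {R : Type*} [CommRing R]

/-- ℤ₂-degree of the basis vector `v_{k+1}` (0-based index `k`): `0` if `k < m`, else `1`. -/
def deg (m : ℕ) {N : ℕ} (k : Fin N) : ℕ := if (k : ℕ) < m then 0 else 1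

/-- The sign `(−1)^{|v_k||v_l|}`. -/
def sgn (R : Type*) [CommRing R] (m : ℕ) {N : ℕ} (k l : Fin N) : R :=
  (-1 : R) ^ (deg m k * deg m l)

/-- Entries (row = input vector) of the operator `T` on `V ⊗ V`, where `x` plays the
role of `q` and `xinv` that of `q⁻¹`:  `T(v_k ⊗ v_k) = q·v_k ⊗ v_k` if `k ≤ m`,
`T(v_k ⊗ v_k) = −q⁻¹·v_k ⊗ v_k` if `k > m`,
`T(v_k ⊗ v_l) = (−1)^{|v_k||v_l|} v_l ⊗ v_k + (q−q⁻¹) v_k ⊗ v_l` if `k < l`, and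
`T(v_k ⊗ v_l) = (−1)^{|v_k||v_l|} v_l ⊗ v_k` if `k > l`. -/
def Tent (x xinv : R) (m : ℕ) {N : ℕ} (p p' : Fin N × Fin N) : R :=
  if p.1 = p.2 then (if (p.1 : ℕ) < m then x else -xinv) * (if p' = p then 1 else 0)
  else if (p.1 : ℕ) < (p.2 : ℕ) then
    sgn R m p.1 p.2 * (if p' = (p.2, p.1) then 1 else 0)
      + (x - xinv) * (if p' = p then 1 else 0)
  else sgn R m p.1 p.2 * (if p' = (p.2, p.1) then 1 else 0)

/-- Entries of the signed swap `P(v_k ⊗ v_l) = (−1)^{|v_k||v_l|} v_l ⊗ v_k`. -/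
def Pent (R : Type*) [CommRing R] (m : ℕ) {N : ℕ} (p p' : Fin N × Fin N) : R :=
  sgn R m p.1 p.2 * (if p' = (p.2, p.1) then 1 else 0)

/-- The operator `Id^{⊗ i} ⊗ E ⊗ Id^{⊗ (r−i−2)}` on `V^{⊗ r}` obtained from a two-site
operator `E` acting on the (0-based) tensor positions `i` and `i+1`. -/
def twoSiteOp {N : ℕ} (E : Fin N × Fin N → Fin N × Fin N → R) (r i : ℕ) (h : i + 1 < r) :
    Matrix (Fin r → Fin N) (Fin r → Fin N) R := fun a b =>
  E (a ⟨i, Nat.lt_of_succ_lt h⟩, a ⟨i + 1, h⟩) (b ⟨i, Nat.lt_of_succ_lt h⟩, b ⟨i + 1, h⟩) *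
    ∏ j ∈ Finset.univ \ ({⟨i, Nat.lt_of_succ_lt h⟩, ⟨i + 1, h⟩} : Finset (Fin r)),
      (if a j = b j then (1 : R) else 0)

/-- The Hecke operator `T_{i+1} = Id^{⊗ i} ⊗ T ⊗ Id^{⊗ (r−i−2)}` on `V^{⊗ r}`
(here `i` is the 0-based position of the first tensor factor it acts on). -/
def heckeOp (x xinv : R) (m : ℕ) {N : ℕ} (r i : ℕ) (h : i + 1 < r) :
    Matrix (Fin r → Fin N) (Fin r → Fin N) R :=
  twoSiteOp (Tent x xinv m) r i h

/-- The signed swap operator `P_{i+1} = Id^{⊗ i} ⊗ P ⊗ Id^{⊗ (r−i−2)}` on `V^{⊗ r}`. -/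
def swapOp (R : Type*) [CommRing R] (m : ℕ) {N : ℕ} (r i : ℕ) (h : i + 1 < r) :
    Matrix (Fin r → Fin N) (Fin r → Fin N) R :=
  twoSiteOp (Pent R m) r i h

/-- The parity operator `S v_j = (−1)^{|v_j|} v_j`. -/
def Smat (R : Type*) [CommRing R] (m : ℕ) {N : ℕ} : Matrix (Fin N) (Fin N) R :=
  fun a b => if a = b then (-1 : R) ^ deg m a else 0

/-- The diagonal operator `Q_b v_j = q^{δ_{bj}} v_j` (`x` playing the role of `q`, or of
`q⁻¹` for the inverse operator). -/
def Qmat (x : R) {N : ℕ} (b0 : Fin N) : Matrix (Fin N) (Fin N) R :=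
  fun a b => if a = b then (if a = b0 then x else 1) else 0

/-- `E_k v_{k+1} = v_k`, `E_k v_j = 0` otherwise (0-based `k`; row = input). -/
def Emat (R : Type*) [CommRing R] {N : ℕ} (k : ℕ) : Matrix (Fin N) (Fin N) R :=
  fun a b => if (a : ℕ) = k + 1 ∧ (b : ℕ) = k then 1 else 0

/-- `F_k v_k = v_{k+1}`, `F_k v_j = 0` otherwise (0-based `k`; row = input). -/
def Fmat (R : Type*) [CommRing R] {N : ℕ} (k : ℕ) : Matrix (Fin N) (Fin N) R :=
  fun a b => if (a : ℕ) = k ∧ (b : ℕ) = k + 1 then 1 else 0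

/-- The diagonal operator `D_k v_j = q^{s(k)δ_{kj} − s(k+1)δ_{k+1,j}} v_j`
(0-based `k`, so `s(k) = 1` iff `k < m`, and `s(k) = −1` otherwise). -/
def Dmat (x xinv : R) (m : ℕ) {N : ℕ} (k : ℕ) : Matrix (Fin N) (Fin N) R :=
  fun a b => if a = b then
    (if (a : ℕ) = k then (if k < m then x else xinv)
     else if (a : ℕ) = k + 1 then (if k + 1 < m then xinv else x) else 1)
  else 0

/-- The inverse `D_k⁻¹` of `Dmat` (obtained by exchanging `q` and `q⁻¹`). -/
def Dinvmat (x xinv : R) (m : ℕ) {N : ℕ} (k : ℕ) : Matrix (Fin N) (Fin N) R :=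
  Dmat xinv x m k

/-- `S^{p(k)}`, where `p(k) = 1` if the 0-based `k` satisfies `k + 1 = m` (the odd simple
root) and `p(k) = 0` otherwise. -/
def SPmat (R : Type*) [CommRing R] (m : ℕ) {N : ℕ} (k : ℕ) : Matrix (Fin N) (Fin N) R :=
  if k + 1 = m then Smat R m else 1

/-- Kronecker (tensor) product of `r` one-site operators, as a matrix on `V^{⊗ r}`. -/
def kron {N r : ℕ} (M : Fin r → Matrix (Fin N) (Fin N) R) :
    Matrix (Fin r → Fin N) (Fin r → Fin N) R :=
  fun a b => ∏ j, M j (a j) (b j)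

/-- `ρ_r(σ) = S^{⊗ r}`. -/
def rhoSigma (R : Type*) [CommRing R] (m : ℕ) {N : ℕ} (r : ℕ) :
    Matrix (Fin r → Fin N) (Fin r → Fin N) R :=
  kron fun _ => Smat R m

/-- `ρ_r(q^{δ_b}) = Q_b^{⊗ r}` (and its inverse, substituting `q⁻¹` for `x`). -/
def rhoQ (x : R) {N : ℕ} (r : ℕ) (b0 : Fin N) :
    Matrix (Fin r → Fin N) (Fin r → Fin N) R :=
  kron fun _ => Qmat x b0

/-- `ρ_r(e_k) = Σ_{j=1}^{r} (S^{p(k)})^{⊗(j−1)} ⊗ E_k ⊗ (D_k^{−1})^{⊗(r−j)}`. -/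
def rhoE (x xinv : R) (m : ℕ) {N : ℕ} (r : ℕ) (k : ℕ) :
    Matrix (Fin r → Fin N) (Fin r → Fin N) R :=
  ∑ p : Fin r, kron fun j =>
    if j < p then SPmat R m k else if j = p then Emat R k else Dinvmat x xinv m k

/-- `ρ_r(f_k) = Σ_{j=1}^{r} (S^{p(k)}D_k)^{⊗(j−1)} ⊗ F_k ⊗ Id^{⊗(r−j)}`. -/
def rhoF (x xinv : R) (m : ℕ) {N : ℕ} (r : ℕ) (k : ℕ) :
    Matrix (Fin r → Fin N) (Fin r → Fin N) R :=
  ∑ p : Fin r, kron fun j =>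
    if j < p then SPmat R m k * Dmat x xinv m k else if j = p then Fmat R k else 1

/-- The generators `T_1, …, T_{r−1}` of the image of the sign `q`-permutation
representation of the Iwahori–Hecke algebra on `V^{⊗ r}`. -/
def heckeGens (x xinv : R) (m : ℕ) {N : ℕ} (r : ℕ) :
    Set (Matrix (Fin r → Fin N) (Fin r → Fin N) R) :=
  {M | ∃ (i : ℕ) (h : i + 1 < r), M = heckeOp x xinv m r i h}

/-- The signed-swap generators `P_1, …, P_{r−1}` (the `q → 1` specialization). -/
def swapGens (R : Type*) [CommRing R] (m : ℕ) {N : ℕ} (r : ℕ) :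
    Set (Matrix (Fin r → Fin N) (Fin r → Fin N) R) :=
  {M | ∃ (i : ℕ) (h : i + 1 < r), M = swapOp R m r i h}

/-- The generators `ρ_r(σ)`, `ρ_r(q^{± δ_b})` (`1 ≤ b ≤ N`), `ρ_r(e_k)`, `ρ_r(f_k)`
(`1 ≤ k ≤ N−1`) of the image of the vector representation of `U_q^σ(gl(m,n))`. -/
def quantumGens (x xinv : R) (m : ℕ) {N : ℕ} (r : ℕ) :
    Set (Matrix (Fin r → Fin N) (Fin r → Fin N) R) :=
  {rhoSigma R m r} ∪ (Set.range fun b : Fin N => rhoQ x r b)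
    ∪ (Set.range fun b : Fin N => rhoQ xinv r b)
    ∪ (Set.range fun k : Fin (N - 1) => rhoE x xinv m r (k : ℕ))
    ∪ (Set.range fun k : Fin (N - 1) => rhoF x xinv m r (k : ℕ))

end CommonDefs

/-- The base field `K = ℚ(q)` of rational functions over `ℚ`. -/
abbrev 𝕂 : Type := RatFunc ℚ

/-- The indeterminate `q` of `K = ℚ(q)`. -/
noncomputable def q : 𝕂 := RatFunc.X

section TwoSiteAct

variable {R : Type*} [CommRing R] {N : ℕ} (A B : Fin N → Fin N → R)

def twoSiteAct {r : ℕ} (i j : Fin r) (f : (Fin r → Fin N) → R) (a : Fin r → Fin N) : R :=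
  A (a i) (a j) * f a + B (a i) (a j) * f (a ∘ Equiv.swap i j)

theorem twoSiteAct_comp {r s : ℕ} (φ : (Fin s → Fin N) → Fin r → Fin N) {i j : Fin r}
    {i' j' : Fin s} (hi : ∀ b, φ b i = b i') (hj : ∀ b, φ b j = b j')
    (hswap : ∀ b, φ b ∘ Equiv.swap i j = φ (b ∘ Equiv.swap i' j'))
    (f : (Fin r → Fin N) → R) :
    twoSiteAct A B i j f ∘ φ = twoSiteAct A B i' j' (f ∘ φ) := by
  funext b
  simp only [twoSiteAct, Function.comp_apply, hi, hj, hswap]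

theorem twoSiteAct_braid_of_three
    (h3 : ∀ g : (Fin 3 → Fin N) → R,
      twoSiteAct A B 0 1 (twoSiteAct A B 1 2 (twoSiteAct A B 0 1 g))
        = twoSiteAct A B 1 2 (twoSiteAct A B 0 1 (twoSiteAct A B 1 2 g)))
    {r : ℕ} {i j l : Fin r} (hij : i ≠ j) (hjl : j ≠ l) (hil : i ≠ l)
    (f : (Fin r → Fin N) → R) :
    twoSiteAct A B i j (twoSiteAct A B j l (twoSiteAct A B i j f))
      = twoSiteAct A B j l (twoSiteAct A B i j (twoSiteAct A B j l f)) := by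
  funext a
  let φ : (Fin 3 → Fin N) → Fin r → Fin N := fun b p =>
    if p = i then b 0 else if p = j then b 1 else if p = l then b 2 else a p
  have hi : ∀ b, φ b i = b 0 := by simp [φ]
  have hj : ∀ b, φ b j = b 1 := by simp [φ, hij.symm]
  have hl : ∀ b, φ b l = b 2 := by simp [φ, hil.symm, hjl.symm]
  have hswap01 : ∀ b, φ b ∘ Equiv.swap i j = φ (b ∘ Equiv.swap 0 1) := by
    intro b; funext p
    simp only [φ, Function.comp_apply, Equiv.swap_apply_def]
    split_ifs <;> simp_all
  have hswap12 : ∀ b, φ b ∘ Equiv.swap j l = φ (b ∘ Equiv.swap 1 2) := by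
    intro b; funext p
    simp only [φ, Function.comp_apply, Equiv.swap_apply_def]
    split_ifs <;> simp_all
  have ha : φ ![a i, a j, a l] = a := by
    funext p
    simp only [φ]
    split_ifs <;> simp_all
  have h01 := twoSiteAct_comp A B φ hi hj hswap01
  have h12 := twoSiteAct_comp A B φ hj hl hswap12
  rw [← ha, ← Function.comp_apply (f := twoSiteAct A B i j _), h01, h12, h01, h3,
    ← h12, ← h01, ← h12, Function.comp_apply]

theorem twoSiteAct_zero_one_apply_vec (g : (Fin 3 → Fin N) → R) (u v w : Fin N) :
    twoSiteAct A B 0 1 g ![u, v, w] = A u v * g ![u, v, w] + B u v * g ![v, u, w] := by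
  have hswap : ![u, v, w] ∘ Equiv.swap 0 1 = ![v, u, w] := by
    funext p; fin_cases p <;> rfl
  simp [twoSiteAct, hswap]

theorem twoSiteAct_one_two_apply_vec (g : (Fin 3 → Fin N) → R) (u v w : Fin N) :
    twoSiteAct A B 1 2 g ![u, v, w] = A v w * g ![u, v, w] + B v w * g ![u, w, v] := by
  have hswap : ![u, v, w] ∘ Equiv.swap 1 2 = ![u, w, v] := by
    funext p; fin_cases p <;> rfl
  simp [twoSiteAct, hswap]

variable {A B} in
theorem twoSiteAct_braid_three {z : R}
    (hAdiag : ∀ u, A u u * A u u = z * A u u + 1)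
    (hAlt : ∀ u v, u < v → A u v = z) (hAgt : ∀ u v, v < u → A u v = 0)
    (hBdiag : ∀ u, B u u = 0) (hB : ∀ u v, u ≠ v → B u v * B v u = 1)
    (g : (Fin 3 → Fin N) → R) :
    twoSiteAct A B 0 1 (twoSiteAct A B 1 2 (twoSiteAct A B 0 1 g))
      = twoSiteAct A B 1 2 (twoSiteAct A B 0 1 (twoSiteAct A B 1 2 g)) := by
  funext b
  obtain ⟨u, v, w, rfl⟩ : ∃ u v w, b = ![u, v, w] :=
    ⟨b 0, b 1, b 2, by funext p; fin_cases p <;> rfl⟩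
  simp only [twoSiteAct_zero_one_apply_vec, twoSiteAct_one_two_apply_vec]
  -- in each relative order of `u, v, w` the identity is a ring consequence of the hypotheses
  rcases lt_trichotomy u v with huv | huv | huv <;>
  rcases lt_trichotomy v w with hvw | hvw | hvw <;>
  rcases lt_trichotomy u w with huw | huw | huw <;>
  subst_vars <;>
  first | (exfalso; order) | grind

end TwoSiteAct

section TwoSiteOp

variable {R : Type*} [CommRing R] {N r : ℕ}

theorem ite_pair_mul_prod_ite {i j : Fin r} {a d : Fin r → Fin N}
    (hd : ∀ l, l ≠ i → l ≠ j → d l = a l) (c : Fin r → Fin N) :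
    (if (c i, c j) = (d i, d j) then (1 : R) else 0)
        * ∏ l ∈ Finset.univ \ {i, j}, (if a l = c l then (1 : R) else 0)
      = if c = d then 1 else 0 := by
  rw [Finset.prod_boole, ite_zero_mul_ite_zero, one_mul]
  congr 1
  apply propext
  constructor
  · rintro ⟨hcd, hrest⟩
    obtain ⟨hci, hcj⟩ := Prod.ext_iff.mp hcd
    funext l
    by_cases hli : l = i
    · subst hli; exact hci
    by_cases hlj : l = j
    · subst hlj; exact hcj
    rw [hd l hli hlj, hrest l (by simp [hli, hlj])]
  · rintro rfl
    refine ⟨rfl, fun l hl => ?_⟩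
    simp only [Finset.mem_sdiff, Finset.mem_univ, Finset.mem_insert, Finset.mem_singleton,
      true_and, not_or] at hl
    exact (hd l hl.1 hl.2).symm

variable {E : Fin N × Fin N → Fin N × Fin N → R} {A B : Fin N → Fin N → R}

theorem twoSiteOp_apply
    (hE : ∀ p p', E p p' = A p.1 p.2 * (if p' = p then 1 else 0)
      + B p.1 p.2 * (if p' = p.swap then 1 else 0))
    {k : ℕ} (h : k + 1 < r) (a c : Fin r → Fin N) :
    twoSiteOp E r k h a c
      = A (a ⟨k, k.lt_of_succ_lt h⟩) (a ⟨k + 1, h⟩) * (if c = a then 1 else 0)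
        + B (a ⟨k, k.lt_of_succ_lt h⟩) (a ⟨k + 1, h⟩)
          * (if c = a ∘ Equiv.swap ⟨k, k.lt_of_succ_lt h⟩ ⟨k + 1, h⟩ then 1 else 0) := by
  rw [twoSiteOp]
  set i : Fin r := ⟨k, k.lt_of_succ_lt h⟩
  set j : Fin r := ⟨k + 1, h⟩
  have hswap : (a i, a j).swap = ((a ∘ Equiv.swap i j) i, (a ∘ Equiv.swap i j) j) := by simp
  rw [hE, add_mul, mul_assoc, mul_assoc, ite_pair_mul_prod_ite (fun _ _ _ => rfl) c, hswap,
    ite_pair_mul_prod_ite (fun l hli hlj => by simp [Equiv.swap_apply_of_ne_of_ne hli hlj]) c]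

theorem twoSiteOp_mul_apply
    (hE : ∀ p p', E p p' = A p.1 p.2 * (if p' = p then 1 else 0)
      + B p.1 p.2 * (if p' = p.swap then 1 else 0))
    {k : ℕ} (h : k + 1 < r) (X : Matrix (Fin r → Fin N) (Fin r → Fin N) R)
    (a b : Fin r → Fin N) :
    (twoSiteOp E r k h * X) a b
      = twoSiteAct A B ⟨k, k.lt_of_succ_lt h⟩ ⟨k + 1, h⟩ (fun c => X c b) a := by
  simp [Matrix.mul_apply, twoSiteOp_apply hE, add_mul, ite_mul, Finset.sum_add_distrib, twoSiteAct]

end TwoSiteOp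

section Hecke

variable {R : Type*} [CommRing R] {N : ℕ}

def heckeDiag (x xinv : R) (m : ℕ) (u v : Fin N) : R :=
  if u = v then (if (u : ℕ) < m then x else -xinv) else if u < v then x - xinv else 0

def heckeSwap (R : Type*) [CommRing R] (m : ℕ) (u v : Fin N) : R :=
  if u = v then 0 else sgn R m u v

theorem Tent_eq_heckeDiag_add_heckeSwap (x xinv : R) (m : ℕ) (p p' : Fin N × Fin N) :
    Tent x xinv m p p' = heckeDiag x xinv m p.1 p.2 * (if p' = p then 1 else 0)
      + heckeSwap R m p.1 p.2 * (if p' = p.swap then 1 else 0) := by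
  obtain ⟨u, v⟩ := p
  rcases lt_trichotomy u v with huv | rfl | huv
  · simp [Tent, heckeDiag, heckeSwap, huv, huv.ne, Fin.lt_def.mp huv]
    ring
  · simp [Tent, heckeDiag, heckeSwap]
  · simp [Tent, heckeDiag, heckeSwap, huv.ne', lt_asymm huv, lt_asymm (Fin.lt_def.mp huv)]

theorem heckeDiag_self_mul_self {x xinv : R} (hx : x * xinv = 1) (m : ℕ) (u : Fin N) :
    heckeDiag x xinv m u u * heckeDiag x xinv m u u
      = (x - xinv) * heckeDiag x xinv m u u + 1 := by
  simp only [heckeDiag]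
  split_ifs <;> linear_combination hx

theorem heckeDiag_of_lt (x xinv : R) (m : ℕ) {u v : Fin N} (h : u < v) :
    heckeDiag x xinv m u v = x - xinv := by
  simp [heckeDiag, h, h.ne]

theorem heckeDiag_of_gt (x xinv : R) (m : ℕ) {u v : Fin N} (h : v < u) :
    heckeDiag x xinv m u v = 0 := by
  simp [heckeDiag, h.ne', lt_asymm h]

theorem heckeSwap_self (m : ℕ) (u : Fin N) : heckeSwap R m u u = 0 := by
  simp [heckeSwap]

theorem heckeSwap_mul_heckeSwap (m : ℕ) {u v : Fin N} (h : u ≠ v) :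
    heckeSwap R m u v * heckeSwap R m v u = 1 := by
  rw [heckeSwap, heckeSwap, if_neg h, if_neg h.symm, sgn, sgn, mul_comm (deg m v), ← pow_add,
    ← two_mul, pow_mul, neg_one_sq, one_pow]

theorem heckeOp_braid {x xinv : R} (hx : x * xinv = 1) (m r k : ℕ) (h₀ : k + 1 < r)
    (h₁ : k + 1 + 1 < r) :
    heckeOp x xinv m (N := N) r k h₀ * heckeOp x xinv m r (k + 1) h₁ * heckeOp x xinv m r k h₀
      = heckeOp x xinv m r (k + 1) h₁ * heckeOp x xinv m r k h₀
          * heckeOp x xinv m r (k + 1) h₁ := by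
  have hbraid := twoSiteAct_braid_of_three (heckeDiag (N := N) x xinv m) (heckeSwap R m)
    (twoSiteAct_braid_three (heckeDiag_self_mul_self hx m) (fun _ _ => heckeDiag_of_lt x xinv m)
      (fun _ _ => heckeDiag_of_gt x xinv m) (heckeSwap_self m)
      (fun _ _ => heckeSwap_mul_heckeSwap m))
    (i := ⟨k, by omega⟩) (j := ⟨k + 1, h₀⟩) (l := ⟨k + 1 + 1, h₁⟩)
    (Fin.ne_of_lt (Fin.mk_lt_mk.2 (by omega))) (Fin.ne_of_lt (Fin.mk_lt_mk.2 (by omega)))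
    (Fin.ne_of_lt (Fin.mk_lt_mk.2 (by omega)))
  ext a b
  rw [← Matrix.mul_one (heckeOp x xinv m r k h₀ * _ * _),
    ← Matrix.mul_one (heckeOp x xinv m r (k + 1) h₁ * _ * _)]
  simp only [Matrix.mul_assoc, heckeOp,
    twoSiteOp_mul_apply (Tent_eq_heckeDiag_add_heckeSwap x xinv m)]
  exact congrFun (hbraid _) a

end Hecke

/-- For every `i` with `1 ≤ i ≤ r−2`, the braid relation
`T_i T_{i+1} T_i = T_{i+1} T_i T_{i+1}` holds in `End_K(V^{⊗ r})`. -/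
theorem hecke_braid_relation (m n r : ℕ)
    (i : ℕ) (hi1 : 1 ≤ i) (hi2 : i ≤ r - 2) :
    heckeOp q q⁻¹ m (N := m + n) r (i - 1) (by omega) * heckeOp q q⁻¹ m (N := m + n) r i (by omega) * heckeOp q q⁻¹ m (N := m + n) r (i - 1) (by omega)
      = heckeOp q q⁻¹ m (N := m + n) r i (by omega) * heckeOp q q⁻¹ m (N := m + n) r (i - 1) (by omega) * heckeOp q q⁻¹ m (N := m + n) r i (by omega) := by
  obtain ⟨k, rfl⟩ : ∃ k, i = k + 1 := ⟨i - 1, by omega⟩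
  exact heckeOp_braid (mul_inv_cancel₀ RatFunc.X_ne_zero) m r k _ _
end

section
/- The tensor space V^{⊗r} is a semisimple (completely reducible) module over the K-subalgebra ℬ_q of End_K(V^{⊗r}) generated by the operators ρ_r(σ), ρ_r(q^{δ_b})^{±1} for 1 ≤ b ≤ m+n, ρ_r(e_k) and ρ_r(f_k) for 1 ≤ k ≤ m+n−1 (the image of the vector representation of the quantum superalgebra U_q^σ(gl(m,n))). -/
set_option synthInstance.maxHeartbeats 1000000
set_option maxHeartbeats 1000000

open scoped BigOperators Kronecker

/-- The image `ℬ_q` of the vector representation of `U_q^σ(gl(m,n))`: the `K`-subalgebra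
of `End_K(V^{⊗ r})` generated by `ρ_r(σ)`, `ρ_r(q^{δ_b})^{±1}` (`1 ≤ b ≤ m+n`),
`ρ_r(e_k)` and `ρ_r(f_k)` (`1 ≤ k ≤ m+n−1`). -/
noncomputable def Bq (m n r : ℕ) :
    Subalgebra 𝕂 (Module.End 𝕂 ((Fin r → Fin (m + n)) → 𝕂)) :=
  Algebra.adjoin 𝕂 (Matrix.vecMulLinear '' quantumGens q q⁻¹ m (N := m + n) r)

section AuxProof

open Matrix

variable {R : Type*} [CommRing R]

/-- Diagonal function of `Dmat`. -/
def ddiag (x xinv : R) (m k : ℕ) {N : ℕ} : Fin N → R := fun a =>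
  if (a : ℕ) = k then (if k < m then x else xinv)
  else if (a : ℕ) = k + 1 then (if k + 1 < m then xinv else x) else 1

lemma Dmat_eq_diagonal (x xinv : R) (m k : ℕ) {N : ℕ} :
    Dmat x xinv m (N := N) k = diagonal (ddiag x xinv m k) := rfl

lemma Dinvmat_eq_diagonal (x xinv : R) (m k : ℕ) {N : ℕ} :
    Dinvmat x xinv m (N := N) k = diagonal (ddiag xinv x m k) := rfl

lemma Qmat_eq_diagonal (x : R) {N : ℕ} (b0 : Fin N) :
    Qmat x b0 = diagonal (fun a => if a = b0 then x else 1) := rfl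

lemma Smat_eq_diagonal (m : ℕ) {N : ℕ} :
    Smat R m (N := N) = diagonal (fun a => (-1 : R) ^ deg m a) := rfl

/-- Diagonal function of `SPmat`. -/
def spdiag (m k : ℕ) {N : ℕ} : Fin N → R := fun a =>
  if k + 1 = m then (-1 : R) ^ deg m a else 1

lemma SPmat_eq_diagonal (m k : ℕ) {N : ℕ} :
    SPmat R m (N := N) k = diagonal (spdiag m k) := by
  unfold SPmat
  split_ifs with h
  · rw [Smat_eq_diagonal]
    refine congrArg Matrix.diagonal (funext fun a => ?_)
    unfold spdiag
    rw [if_pos h]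
  · rw [← Matrix.diagonal_one]
    refine congrArg Matrix.diagonal (funext fun a => ?_)
    unfold spdiag
    rw [if_neg h]

lemma kron_apply {N r : ℕ} (M : Fin r → Matrix (Fin N) (Fin N) R) (a b : Fin r → Fin N) :
    kron M a b = ∏ j, M j (a j) (b j) := rfl

lemma kron_diagonal {N r : ℕ} (d : Fin N → R) :
    kron (fun _ : Fin r => diagonal d)
      = diagonal (fun a : Fin r → Fin N => ∏ j, d (a j)) := by
  ext a b
  rcases eq_or_ne a b with rfl | h
  · rw [diagonal_apply_eq, kron_apply]
    exact Finset.prod_congr rfl fun j _ => diagonal_apply_eq _ _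
  · rw [diagonal_apply_ne _ h, kron_apply]
    obtain ⟨j, hj⟩ := Function.ne_iff.mp h
    exact Finset.prod_eq_zero (Finset.mem_univ j) (diagonal_apply_ne _ hj)

lemma kron_mul {N r : ℕ} (A B : Fin r → Matrix (Fin N) (Fin N) R) :
    kron A * kron B = kron fun j => A j * B j := by
  ext a c
  rw [Matrix.mul_apply]
  simp only [kron_apply, Matrix.mul_apply]
  rw [Finset.prod_univ_sum, Fintype.piFinset_univ]
  exact Finset.sum_congr rfl fun b _ => (Finset.prod_mul_distrib).symm

lemma ddiag_mul_ddiag {x xinv : R} (hx : x * xinv = 1) (m k : ℕ) {N : ℕ} (a : Fin N) :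
    ddiag x xinv m k a * ddiag xinv x m k a = 1 := by
  have hx' : xinv * x = 1 := by rw [mul_comm]; exact hx
  unfold ddiag
  split_ifs <;> simp [hx, hx']

lemma rhoSigma_eq_diagonal (m : ℕ) {N r : ℕ} :
    rhoSigma R m (N := N) r
      = diagonal (fun a : Fin r → Fin N => ∏ j, (-1 : R) ^ deg m (a j)) := by
  simp only [rhoSigma, Smat_eq_diagonal, kron_diagonal]

lemma rhoQ_eq_diagonal (x : R) {N r : ℕ} (b0 : Fin N) :
    rhoQ x r b0
      = diagonal (fun a : Fin r → Fin N => ∏ j, if a j = b0 then x else 1) := by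
  simp only [rhoQ, Qmat_eq_diagonal, kron_diagonal]

lemma rhoSigma_transpose (m : ℕ) {N r : ℕ} :
    (rhoSigma R m (N := N) r)ᵀ = rhoSigma R m r := by
  rw [rhoSigma_eq_diagonal, Matrix.diagonal_transpose, ← rhoSigma_eq_diagonal]

lemma rhoQ_transpose (x : R) {N r : ℕ} (b0 : Fin N) :
    (rhoQ x r b0)ᵀ = rhoQ x r b0 := by
  rw [rhoQ_eq_diagonal, Matrix.diagonal_transpose, ← rhoQ_eq_diagonal]

lemma fac_lt {N : ℕ} (x xinv : R) (hx : x * xinv = 1) (m k : ℕ) (u v : Fin N) :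
    SPmat R m k u v
      = (SPmat R m (N := N) k * Dmat x xinv m k
          : Matrix (Fin N) (Fin N) R) v u * ddiag xinv x m k u := by
  rw [SPmat_eq_diagonal, Dmat_eq_diagonal, diagonal_mul_diagonal]
  rcases eq_or_ne u v with rfl | h
  · rw [diagonal_apply_eq, diagonal_apply_eq, mul_assoc,
      ddiag_mul_ddiag hx, mul_one]
  · rw [diagonal_apply_ne _ h, diagonal_apply_ne _ (Ne.symm h), zero_mul]

lemma fac_eq {N : ℕ} (x xinv : R) (hx : x * xinv = 1) (m k : ℕ) (u v : Fin N) :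
    Emat R k u v
      = (if k + 1 < m then xinv else x) * (Fmat R k v u * ddiag xinv x m k u) := by
  have hx' : xinv * x = 1 := by rw [mul_comm]; exact hx
  unfold Emat Fmat ddiag
  split_ifs <;> first | rfl | omega | simp_all | (simp_all; omega)

lemma fac_gt {N : ℕ} (x xinv : R) (m k : ℕ) (u v : Fin N) :
    Dinvmat x xinv m k u v
      = (1 : Matrix (Fin N) (Fin N) R) v u * ddiag xinv x m k u := by
  rw [Dinvmat_eq_diagonal]
  rcases eq_or_ne u v with rfl | h
  · rw [diagonal_apply_eq, Matrix.one_apply_eq, one_mul]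
  · rw [diagonal_apply_ne _ h, Matrix.one_apply_ne (Ne.symm h), zero_mul]

lemma fac_lt' {N : ℕ} (x xinv : R) (m k : ℕ) (u v : Fin N) :
    (SPmat R m (N := N) k * Dmat x xinv m k
        : Matrix (Fin N) (Fin N) R) v u
      = SPmat R m k u v * ddiag x xinv m k u := by
  rw [SPmat_eq_diagonal, Dmat_eq_diagonal, diagonal_mul_diagonal]
  rcases eq_or_ne u v with rfl | h
  · rw [diagonal_apply_eq, diagonal_apply_eq]
  · rw [diagonal_apply_ne _ (Ne.symm h), diagonal_apply_ne _ h, zero_mul]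

lemma fac_eq' {N : ℕ} (x xinv : R) (hx : x * xinv = 1) (m k : ℕ) (u v : Fin N) :
    Fmat R k v u
      = (if k + 1 < m then x else xinv) * (Emat R k u v * ddiag x xinv m k u) := by
  have hx' : xinv * x = 1 := by rw [mul_comm]; exact hx
  unfold Emat Fmat ddiag
  split_ifs <;> first | rfl | omega | simp_all | (simp_all; omega)

lemma fac_gt' {N : ℕ} (x xinv : R) (hx : x * xinv = 1) (m k : ℕ) (u v : Fin N) :
    (1 : Matrix (Fin N) (Fin N) R) v u
      = Dinvmat x xinv m k u v * ddiag x xinv m k u := by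
  rw [Dinvmat_eq_diagonal]
  rcases eq_or_ne u v with rfl | h
  · rw [diagonal_apply_eq, Matrix.one_apply_eq, mul_comm, ddiag_mul_ddiag hx]
  · rw [diagonal_apply_ne _ h, Matrix.one_apply_ne (Ne.symm h), zero_mul]

lemma rhoE_transpose {N : ℕ} (x xinv : R) (hx : x * xinv = 1) (m r k : ℕ) :
    (rhoE x xinv m (N := N) r k)ᵀ
      = (if k + 1 < m then xinv else x) •
          (rhoF x xinv m r k * kron (fun _ : Fin r => Dinvmat x xinv m (N := N) k)) := by
  have hD : kron (fun _ : Fin r => Dinvmat x xinv m (N := N) k)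
      = diagonal (fun a : Fin r → Fin N => ∏ j, ddiag xinv x m k (a j)) := by
    simp only [Dinvmat_eq_diagonal]; exact kron_diagonal _
  ext b a
  rw [transpose_apply, Matrix.smul_apply, hD, Matrix.mul_diagonal, smul_eq_mul,
    rhoE, rhoF, Matrix.sum_apply, Matrix.sum_apply, Finset.sum_mul, Finset.mul_sum]
  refine Finset.sum_congr rfl fun p _ => ?_
  rw [kron_apply, kron_apply]
  calc
    ∏ j, (if j < p then SPmat R m k else if j = p then Emat R k
          else Dinvmat x xinv m k) (a j) (b j)
        = ∏ j, ((if j = p then (if k + 1 < m then xinv else x) else 1) *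
            ((if j < p then SPmat R m k * Dmat x xinv m k else if j = p then Fmat R k
              else 1) (b j) (a j) * ddiag xinv x m k (a j))) := by
      refine Finset.prod_congr rfl fun j _ => ?_
      rcases lt_trichotomy j p with h | rfl | h
      · simp only [if_pos h, if_neg (ne_of_lt h), one_mul]
        exact fac_lt x xinv hx m k (a j) (b j)
      · simp only [if_neg (lt_irrefl j), if_pos (Eq.refl j)]
        exact fac_eq x xinv hx m k (a j) (b j)
      · simp only [if_neg (lt_asymm h), if_neg (ne_of_gt h), one_mul]
        exact fac_gt x xinv m k (a j) (b j)
    _ = (if k + 1 < m then xinv else x) *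
          ((∏ j, (if j < p then SPmat R m k * Dmat x xinv m k else if j = p then Fmat R k
              else 1) (b j) (a j)) * ∏ j, ddiag xinv x m k (a j)) := by
      rw [Finset.prod_mul_distrib, Finset.prod_mul_distrib]
      simp only [Finset.prod_ite_eq', Finset.mem_univ, if_true]

lemma rhoF_transpose {N : ℕ} (x xinv : R) (hx : x * xinv = 1) (m r k : ℕ) :
    (rhoF x xinv m (N := N) r k)ᵀ
      = (if k + 1 < m then x else xinv) •
          (kron (fun _ : Fin r => Dmat x xinv m (N := N) k) * rhoE x xinv m r k) := by
  have hD : kron (fun _ : Fin r => Dmat x xinv m (N := N) k)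
      = diagonal (fun a : Fin r → Fin N => ∏ j, ddiag x xinv m k (a j)) := by
    simp only [Dmat_eq_diagonal]; exact kron_diagonal _
  ext a b
  rw [transpose_apply, Matrix.smul_apply, hD, Matrix.diagonal_mul, smul_eq_mul,
    rhoE, rhoF, Matrix.sum_apply, Matrix.sum_apply, Finset.mul_sum, Finset.mul_sum]
  refine Finset.sum_congr rfl fun p _ => ?_
  rw [kron_apply, kron_apply]
  calc
    ∏ j, (if j < p then SPmat R m k * Dmat x xinv m k else if j = p then Fmat R k
          else 1) (b j) (a j)
        = ∏ j, ((if j = p then (if k + 1 < m then x else xinv) else 1) *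
            ((if j < p then SPmat R m k else if j = p then Emat R k
              else Dinvmat x xinv m k) (a j) (b j) * ddiag x xinv m k (a j))) := by
      refine Finset.prod_congr rfl fun j _ => ?_
      rcases lt_trichotomy j p with h | rfl | h
      · simp only [if_pos h, if_neg (ne_of_lt h), one_mul]
        exact fac_lt' x xinv m k (a j) (b j)
      · simp only [if_neg (lt_irrefl j), if_pos (Eq.refl j)]
        exact fac_eq' x xinv hx m k (a j) (b j)
      · simp only [if_neg (lt_asymm h), if_neg (ne_of_gt h), one_mul]
        exact fac_gt' x xinv hx m k (a j) (b j)
    _ = (if k + 1 < m then x else xinv) *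
          ((∏ j, ddiag x xinv m k (a j)) *
            ∏ j, (if j < p then SPmat R m k else if j = p then Emat R k
              else Dinvmat x xinv m k) (a j) (b j)) := by
      rw [Finset.prod_mul_distrib, Finset.prod_mul_distrib]
      simp only [Finset.prod_ite_eq', Finset.mem_univ, if_true]
      ring

lemma Qmat_mul_Qmat {N : ℕ} (x xinv : R) (m k : ℕ) (hk : k + 1 < N) :
    Qmat (if k < m then xinv else x) (⟨k, by omega⟩ : Fin N) *
        Qmat (if k + 1 < m then x else xinv) (⟨k + 1, hk⟩ : Fin N)
      = Dinvmat x xinv m k := by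
  rw [Qmat_eq_diagonal, Qmat_eq_diagonal, diagonal_mul_diagonal, Dinvmat_eq_diagonal]
  refine congrArg Matrix.diagonal (funext fun a => ?_)
  unfold ddiag
  split_ifs <;> simp_all [Fin.ext_iff] <;> omega

lemma kron_Dinv_eq {N : ℕ} (x xinv : R) (m r k : ℕ) (hk : k + 1 < N) :
    kron (fun _ : Fin r => Dinvmat x xinv m (N := N) k)
      = rhoQ (if k < m then xinv else x) r (⟨k, by omega⟩ : Fin N) *
          rhoQ (if k + 1 < m then x else xinv) r (⟨k + 1, hk⟩ : Fin N) := by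
  rw [rhoQ, rhoQ, kron_mul]
  exact congrArg kron (funext fun _ => (Qmat_mul_Qmat x xinv m k hk).symm)

lemma kron_D_eq {N : ℕ} (x xinv : R) (m r k : ℕ) (hk : k + 1 < N) :
    kron (fun _ : Fin r => Dmat x xinv m (N := N) k)
      = rhoQ (if k < m then x else xinv) r (⟨k, by omega⟩ : Fin N) *
          rhoQ (if k + 1 < m then xinv else x) r (⟨k + 1, hk⟩ : Fin N) :=
  kron_Dinv_eq xinv x m r k hk

end AuxProof

section FieldAux

open Matrix

/-- The standard dot product on `ι → 𝕂`. -/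
noncomputable def dotB {ι : Type*} [Fintype ι] (v w : ι → 𝕂) : 𝕂 := ∑ i, v i * w i

variable {ι : Type*} [Fintype ι]

lemma dotB_comm (v w : ι → 𝕂) : dotB v w = dotB w v :=
  Finset.sum_congr rfl fun i _ => mul_comm _ _

lemma dotB_add_left (v1 v2 w : ι → 𝕂) : dotB (v1 + v2) w = dotB v1 w + dotB v2 w := by
  simp [dotB, add_mul, Finset.sum_add_distrib]

lemma dotB_smul_left (c : 𝕂) (v w : ι → 𝕂) : dotB (c • v) w = c * dotB v w := by
  simp [dotB, Finset.mul_sum, mul_assoc]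

lemma dotB_vecMul (M : Matrix ι ι 𝕂) (v w : ι → 𝕂) :
    dotB (M.vecMulLinear v) w = dotB v (Mᵀ.vecMulLinear w) := by
  simp only [dotB, Matrix.vecMulLinear_apply, Matrix.vecMul, dotProduct,
    transpose_apply, Finset.sum_mul, Finset.mul_sum]
  rw [Finset.sum_comm]
  exact Finset.sum_congr rfl fun i _ => Finset.sum_congr rfl fun j _ => by ring

lemma dotB_self_eq_zero {v : ι → 𝕂} (h : dotB v v = 0) : v = 0 := by
  obtain ⟨b, hb⟩ := IsLocalization.exist_integer_multiples
    (nonZeroDivisors (Polynomial ℚ)) (S := 𝕂) Finset.univ v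
  choose p hp using fun i : ι => hb i (Finset.mem_univ i)
  have halg : Function.Injective (algebraMap (Polynomial ℚ) 𝕂) :=
    IsFractionRing.injective _ _
  have hb0 : algebraMap (Polynomial ℚ) 𝕂 (b : Polynomial ℚ) ≠ 0 := by
    intro h0
    exact nonZeroDivisors.coe_ne_zero b (halg (by rw [h0, map_zero]))
  have hsum : ∑ i, p i * p i = 0 := by
    apply halg
    rw [map_sum, map_zero]
    calc ∑ i, algebraMap (Polynomial ℚ) 𝕂 (p i * p i)
        = ∑ i, (algebraMap (Polynomial ℚ) 𝕂 (b : Polynomial ℚ) * v i) *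
            (algebraMap (Polynomial ℚ) 𝕂 (b : Polynomial ℚ) * v i) := by
          refine Finset.sum_congr rfl fun i _ => ?_
          rw [_root_.map_mul, hp i, Algebra.smul_def]
      _ = algebraMap (Polynomial ℚ) 𝕂 (b : Polynomial ℚ) *
            algebraMap (Polynomial ℚ) 𝕂 (b : Polynomial ℚ) * dotB v v := by
          rw [dotB, Finset.mul_sum]
          exact Finset.sum_congr rfl fun i _ => by ring
      _ = 0 := by rw [h, mul_zero]
  have hp0 : ∀ i, p i = 0 := by
    intro i
    apply Polynomial.zero_of_eval_zero
    intro x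
    have h2 : ∑ j, (p j).eval x * (p j).eval x = 0 := by
      simpa [Polynomial.eval_finset_sum, Polynomial.eval_mul] using
        congrArg (Polynomial.eval x) hsum
    exact (Finset.sum_mul_self_eq_zero_iff _ _).1 h2 i (Finset.mem_univ i)
  funext i
  have hzero : algebraMap (Polynomial ℚ) 𝕂 (b : Polynomial ℚ) * v i = 0 := by
    rw [← Algebra.smul_def, ← hp i, hp0 i, map_zero]
  rcases mul_eq_zero.1 hzero with h' | h'
  · exact absurd h' hb0
  · exact h'

/-- The dot product as a bilinear form. -/
noncomputable def dotForm (ι : Type*) [Fintype ι] : LinearMap.BilinForm 𝕂 (ι → 𝕂) :=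
  LinearMap.mk₂ 𝕂 dotB dotB_add_left
    (fun c v w => by rw [smul_eq_mul, dotB_smul_left])
    (fun v w1 w2 => by
      rw [dotB_comm, dotB_add_left, dotB_comm w1 v, dotB_comm w2 v])
    (fun c v w => by rw [smul_eq_mul, dotB_comm, dotB_smul_left, dotB_comm w v])

lemma dotForm_apply (v w : ι → 𝕂) : dotForm ι v w = dotB v w := rfl

lemma vm_mul (A B : Matrix ι ι 𝕂) :
    (A * B).vecMulLinear
      = (B.vecMulLinear * A.vecMulLinear : Module.End 𝕂 (ι → 𝕂)) :=
  LinearMap.ext fun v => by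
    rw [Matrix.vecMulLinear_apply, Module.End.mul_apply, Matrix.vecMulLinear_apply,
      Matrix.vecMulLinear_apply, Matrix.vecMul_vecMul]

lemma vm_smul (c : 𝕂) (A : Matrix ι ι 𝕂) :
    (c • A).vecMulLinear = c • A.vecMulLinear := by
  refine LinearMap.ext fun v => funext fun i => ?_
  simp only [Matrix.vecMulLinear_apply, LinearMap.smul_apply, Pi.smul_apply,
    Matrix.vecMul, dotProduct, Matrix.smul_apply, smul_eq_mul, Finset.mul_sum]
  exact Finset.sum_congr rfl fun j _ => by ring

end FieldAux

section BqAux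

open Matrix

lemma q_mul_inv : q * q⁻¹ = 1 :=
  mul_inv_cancel₀ (by unfold q; exact RatFunc.X_ne_zero)

variable (m n r : ℕ)

lemma mem_Bq_of_gen {M : Matrix (Fin r → Fin (m + n)) (Fin r → Fin (m + n)) 𝕂}
    (hM : M ∈ quantumGens q q⁻¹ m (N := m + n) r) : M.vecMulLinear ∈ Bq m n r :=
  Algebra.subset_adjoin ⟨M, hM, rfl⟩

lemma sigma_mem : (rhoSigma 𝕂 m (N := m + n) r).vecMulLinear ∈ Bq m n r :=
  mem_Bq_of_gen m n r (by simp [quantumGens])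

lemma rhoQ_mem (z : 𝕂) (hz : z = q ∨ z = q⁻¹) (b : Fin (m + n)) :
    (rhoQ z r b).vecMulLinear ∈ Bq m n r := by
  apply mem_Bq_of_gen
  rcases hz with rfl | rfl <;> simp [quantumGens]

lemma rhoE_mem (k : Fin (m + n - 1)) :
    (rhoE q q⁻¹ m (N := m + n) r (k : ℕ)).vecMulLinear ∈ Bq m n r :=
  mem_Bq_of_gen m n r (by simp [quantumGens])

lemma rhoF_mem (k : Fin (m + n - 1)) :
    (rhoF q q⁻¹ m (N := m + n) r (k : ℕ)).vecMulLinear ∈ Bq m n r :=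
  mem_Bq_of_gen m n r (by simp [quantumGens])

lemma transpose_mem {M : Matrix (Fin r → Fin (m + n)) (Fin r → Fin (m + n)) 𝕂}
    (hM : M ∈ quantumGens q q⁻¹ m (N := m + n) r) : Mᵀ.vecMulLinear ∈ Bq m n r := by
  simp only [quantumGens, Set.mem_union, Set.mem_singleton_iff, Set.mem_range] at hM
  rcases hM with ((((rfl | ⟨b, rfl⟩) | ⟨b, rfl⟩) | ⟨k, rfl⟩) | ⟨k, rfl⟩)
  · rw [rhoSigma_transpose]
    exact sigma_mem m n r
  · rw [rhoQ_transpose]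
    exact rhoQ_mem m n r q (Or.inl rfl) b
  · rw [rhoQ_transpose]
    exact rhoQ_mem m n r q⁻¹ (Or.inr rfl) b
  · have hk : (k : ℕ) + 1 < m + n := by have := k.isLt; omega
    rw [rhoE_transpose q q⁻¹ q_mul_inv m r (k : ℕ),
      kron_Dinv_eq q q⁻¹ m r (k : ℕ) hk, vm_smul, vm_mul, vm_mul]
    refine Subalgebra.smul_mem _ (mul_mem (mul_mem ?_ ?_) (rhoF_mem m n r k)) _
    · exact rhoQ_mem m n r _ (by split_ifs; exacts [Or.inl rfl, Or.inr rfl]) _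
    · exact rhoQ_mem m n r _ (by split_ifs; exacts [Or.inr rfl, Or.inl rfl]) _
  · have hk : (k : ℕ) + 1 < m + n := by have := k.isLt; omega
    rw [rhoF_transpose q q⁻¹ q_mul_inv m r (k : ℕ),
      kron_D_eq q q⁻¹ m r (k : ℕ) hk, vm_smul, vm_mul, vm_mul]
    refine Subalgebra.smul_mem _ (mul_mem (rhoE_mem m n r k) (mul_mem ?_ ?_)) _
    · exact rhoQ_mem m n r _ (by split_ifs; exacts [Or.inr rfl, Or.inl rfl]) _
    · exact rhoQ_mem m n r _ (by split_ifs; exacts [Or.inl rfl, Or.inr rfl]) _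

lemma exists_adj : ∀ f ∈ Bq m n r, ∃ g ∈ Bq m n r,
    ∀ v w : (Fin r → Fin (m + n)) → 𝕂, dotB (f v) w = dotB v (g w) := by
  intro f hf
  have hf' : f ∈ Algebra.adjoin 𝕂
      (Matrix.vecMulLinear '' quantumGens q q⁻¹ m (N := m + n) r) := hf
  induction hf' using Algebra.adjoin_induction with
  | mem x hx =>
    obtain ⟨M, hM, rfl⟩ := hx
    exact ⟨Mᵀ.vecMulLinear, transpose_mem m n r hM, fun v w => dotB_vecMul M v w⟩
  | algebraMap c =>
    refine ⟨algebraMap 𝕂 _ c, Subalgebra.algebraMap_mem _ c, fun v w => ?_⟩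
    rw [Module.algebraMap_end_apply, Module.algebraMap_end_apply, dotB_smul_left,
      dotB_comm v (c • w), dotB_smul_left, dotB_comm w v]
  | add x y hx hy ihx ihy =>
    obtain ⟨g1, hg1, e1⟩ := ihx hx
    obtain ⟨g2, hg2, e2⟩ := ihy hy
    refine ⟨g1 + g2, add_mem hg1 hg2, fun v w => ?_⟩
    rw [LinearMap.add_apply, dotB_add_left, e1, e2, LinearMap.add_apply,
      dotB_comm v (g1 w + g2 w), dotB_add_left, dotB_comm (g1 w) v, dotB_comm (g2 w) v]
  | mul x y hx hy ihx ihy =>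
    obtain ⟨g1, hg1, e1⟩ := ihx hx
    obtain ⟨g2, hg2, e2⟩ := ihy hy
    refine ⟨g2 * g1, mul_mem hg2 hg1, fun v w => ?_⟩
    rw [Module.End.mul_apply, e1, e2, Module.End.mul_apply]

end BqAux

/-- The tensor space `V^{⊗ r}` is a semisimple module over the
subalgebra `ℬ_q` of `End_K(V^{⊗ r})`. -/
theorem tensor_space_semisimple_over_Bq (m n r : ℕ) (hm : 1 ≤ m) (hn : 1 ≤ n)
    (hr : 1 ≤ r) :
    @IsSemisimpleModule (Bq m n r) _ ((Fin r → Fin (m + n)) → 𝕂) _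
      (Module.compHom _ (Subalgebra.val (Bq m n r)).toRingHom) := by
  refine @IsSemisimpleModule.mk _ _ _ _ _ ⟨?_⟩
  intro W
  -- The underlying `𝕂`-submodule of `W`.
  let WK : Submodule 𝕂 ((Fin r → Fin (m + n)) → 𝕂) :=
    { carrier := ↑W
      add_mem' := fun ha hb => W.add_mem ha hb
      zero_mem' := W.zero_mem
      smul_mem' := fun c v hv => by
        have h1 : (algebraMap 𝕂 (Bq m n r) c) • v ∈ W := W.smul_mem _ hv
        have h2 : ((algebraMap 𝕂 (Bq m n r) c) • v : (Fin r → Fin (m + n)) → 𝕂)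
            = c • v := by
          show ((algebraMap 𝕂 (Bq m n r) c : Bq m n r) :
              Module.End 𝕂 ((Fin r → Fin (m + n)) → 𝕂)) v = c • v
          rw [show ((algebraMap 𝕂 (Bq m n r) c : Bq m n r) :
              Module.End 𝕂 ((Fin r → Fin (m + n)) → 𝕂))
            = algebraMap 𝕂 (Module.End 𝕂 ((Fin r → Fin (m + n)) → 𝕂)) c from rfl,
            Module.algebraMap_end_apply]
        rwa [h2] at h1 }
  let B : LinearMap.BilinForm 𝕂 ((Fin r → Fin (m + n)) → 𝕂) := dotForm _
  have hrefl : B.IsRefl := fun v w h => by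
    rw [show B w v = dotB w v from rfl, dotB_comm]
    exact h
  have hnd : (B.restrict WK).Nondegenerate := by
    refine ⟨fun v hv => ?_, fun v hv => ?_⟩ <;>
    (have h0 : dotB (v : (Fin r → Fin (m + n)) → 𝕂) (v : (Fin r → Fin (m + n)) → 𝕂)
        = 0 := hv v
     exact Subtype.ext (dotB_self_eq_zero h0))
  have hcompl : IsCompl WK (B.orthogonal WK) :=
    (LinearMap.BilinForm.restrict_nondegenerate_iff_isCompl_orthogonal hrefl).1 hnd
  -- The orthogonal complement as a `Bq`-submodule.
  let W' : @Submodule (Bq m n r) ((Fin r → Fin (m + n)) → 𝕂) _ _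
      (Module.compHom _ (Subalgebra.val (Bq m n r)).toRingHom) :=
    { carrier := ↑(B.orthogonal WK)
      add_mem' := fun ha hb => (B.orthogonal WK).add_mem ha hb
      zero_mem' := (B.orthogonal WK).zero_mem
      smul_mem' := fun g v hv => by
        obtain ⟨h, hhmem, hadj⟩ := exists_adj m n r
          ((g : Module.End 𝕂 ((Fin r → Fin (m + n)) → 𝕂))) g.2
        show g • v ∈ B.orthogonal WK
        rw [LinearMap.BilinForm.mem_orthogonal_iff]
        intro u hu
        show B u (g • v) = 0
        have hguv : (g • v : (Fin r → Fin (m + n)) → 𝕂)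
            = (g : Module.End 𝕂 ((Fin r → Fin (m + n)) → 𝕂)) v := rfl
        have h2 : h u ∈ WK := by
          have h3 : (⟨h, hhmem⟩ : Bq m n r) • u ∈ W := W.smul_mem _ hu
          exact h3
        have h4 : B (h u) v = 0 :=
          (LinearMap.BilinForm.mem_orthogonal_iff.1 hv) (h u) h2
        calc B u (g • v)
            = dotB u ((g : Module.End 𝕂 ((Fin r → Fin (m + n)) → 𝕂)) v) := by
              rw [hguv]; rfl
          _ = dotB ((g : Module.End 𝕂 ((Fin r → Fin (m + n)) → 𝕂)) v) u := dotB_comm _ _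
          _ = dotB v (h u) := hadj v u
          _ = dotB (h u) v := dotB_comm _ _
          _ = 0 := h4 }
  refine ⟨W', ?_, ?_⟩
  · exact Submodule.disjoint_def.mpr fun x hxW hxW' =>
      Submodule.disjoint_def.mp hcompl.disjoint x hxW hxW'
  · rw [codisjoint_iff]
    rw [Submodule.eq_top_iff']
    intro x
    have hx : x ∈ WK ⊔ B.orthogonal WK := by
      rw [codisjoint_iff.mp hcompl.codisjoint]
      trivial
    obtain ⟨y, hy, z, hz, hyz⟩ := Submodule.mem_sup.mp hx
    exact Submodule.mem_sup.mpr ⟨y, hy, z, hz, hyz⟩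
end

section
/- For every k with 1 ≤ k ≤ m+n−1, the operator T on V ⊗ V commutes with ρ_2(e_k) = E_k ⊗ D_k^{−1} + S^{p(k)} ⊗ E_k: in End_K(V ⊗ V) one has T ∘ ρ_2(e_k) = ρ_2(e_k) ∘ T. -/
set_option synthInstance.maxHeartbeats 1000000
set_option maxHeartbeats 1000000

open scoped BigOperators Kronecker

/-- The operator `T` on `V ⊗ V` as a matrix indexed by pairs. -/
noncomputable def T2 (m : ℕ) {N : ℕ} : Matrix (Fin N × Fin N) (Fin N × Fin N) 𝕂 :=
  fun p p' => Tent q q⁻¹ m p p'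

/-! Since `E_k` is a matrix unit and `D_k⁻¹`, `S^{p(k)}` are diagonal, every entry of
`T ρ₂(e_k)` and of `ρ₂(e_k) T` is a sum of two entries of `T`. Both are zero unless one of
the two factors of the input vector `v_a ⊗ v_b` is `v_{k+1}`; the surviving cases reduce
either to `q q⁻¹ = 1` or to the sign identity
`S^{p(k)}_{cc} (−1)^{|v_{k+1}||v_c|} = (−1)^{|v_k||v_c|}`, which is what the factor `S^{p(k)}`
is there to provide. -/

namespace Matrix

variable {ι R : Type*} [Fintype ι] [DecidableEq ι] [CommSemiring R]

theorem mul_single_kronecker_diagonal_apply (M : Matrix (ι × ι) (ι × ι) R) (i j : ι)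
    (d : ι → R) (p : ι × ι) (e f : ι) :
    (M * (single i j 1 ⊗ₖ diagonal d) : Matrix (ι × ι) (ι × ι) R) p (e, f) =
      if j = e then M p (i, f) * d f else 0 := by
  simp [mul_apply, Fintype.sum_prod_type, single_apply, diagonal_apply, ite_and]

theorem mul_diagonal_kronecker_single_apply (M : Matrix (ι × ι) (ι × ι) R) (i j : ι)
    (s : ι → R) (p : ι × ι) (e f : ι) :
    (M * (diagonal s ⊗ₖ single i j 1) : Matrix (ι × ι) (ι × ι) R) p (e, f) =
      if j = f then M p (e, i) * s e else 0 := by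
  simp [mul_apply, Fintype.sum_prod_type, single_apply, diagonal_apply, ite_and]

theorem single_kronecker_diagonal_mul_apply (M : Matrix (ι × ι) (ι × ι) R) (i j : ι)
    (d : ι → R) (a b : ι) (p : ι × ι) :
    ((single i j 1 ⊗ₖ diagonal d) * M : Matrix (ι × ι) (ι × ι) R) (a, b) p =
      if i = a then d b * M (j, b) p else 0 := by
  simp [mul_apply, Fintype.sum_prod_type, single_apply, diagonal_apply, ite_and]

theorem diagonal_kronecker_single_mul_apply (M : Matrix (ι × ι) (ι × ι) R) (i j : ι)
    (s : ι → R) (a b : ι) (p : ι × ι) :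
    ((diagonal s ⊗ₖ single i j 1) * M : Matrix (ι × ι) (ι × ι) R) (a, b) p =
      if i = b then s a * M (a, j) p else 0 := by
  simp [mul_apply, Fintype.sum_prod_type, single_apply, diagonal_apply, ite_and]

end Matrix

section Rho2

variable {R : Type*} [CommRing R] {N : ℕ}

theorem Emat_eq_single {K : ℕ} (hK : K + 1 < N) :
    Emat R K = Matrix.single (⟨K + 1, hK⟩ : Fin N) ⟨K, Nat.lt_of_succ_lt hK⟩ 1 := by
  ext a b
  simp [Emat, Matrix.single_apply, Fin.ext_iff, and_comm, eq_comm]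

theorem isDiag_Dinvmat (x xinv : R) (m K : ℕ) :
    (Dinvmat x xinv m K : Matrix (Fin N) (Fin N) R).IsDiag :=
  fun a b h => by simp [Dinvmat, Dmat, h]

theorem isDiag_SPmat (m K : ℕ) : (SPmat R m K : Matrix (Fin N) (Fin N) R).IsDiag := by
  unfold SPmat
  split_ifs
  · exact fun a b h => by simp [Smat, h]
  · exact Matrix.isDiag_one

theorem SPmat_apply_self (m K : ℕ) (a : Fin N) :
    SPmat R m K a a = if K + 1 = m ∧ m ≤ a then -1 else 1 := by
  unfold SPmat
  split_ifs <;> simp_all [Smat, deg]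

theorem sgn_eq (m : ℕ) (a b : Fin N) : sgn R m a b = if m ≤ a ∧ m ≤ b then -1 else 1 := by
  unfold sgn deg
  split_ifs <;> simp_all <;> omega

theorem Tent_comm_rho2E_entry (x xinv : R) (hx : x * xinv = 1) (m : ℕ) {K : ℕ} {i j : Fin N}
    (hi : (i : ℕ) = K + 1) (hj : (j : ℕ) = K) (a b e f : Fin N) :
    (if j = e then Tent x xinv m (a, b) (i, f) * (Dinvmat x xinv m K).diag f else 0)
        + (if j = f then Tent x xinv m (a, b) (e, i) * (SPmat R m K).diag e else 0) =
      (if i = a then (Dinvmat x xinv m K).diag b * Tent x xinv m (j, b) (e, f) else 0)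
        + (if i = b then (SPmat R m K).diag a * Tent x xinv m (a, j) (e, f) else 0) := by
  simp only [Tent, Matrix.diag_apply, SPmat_apply_self, Dinvmat, Dmat, sgn_eq, Fin.ext_iff,
    Prod.ext_iff, hi, hj]
  grind (splits := 40)

theorem commute_Tent_rho2E (x xinv : R) (hx : x * xinv = 1) (m : ℕ) {K : ℕ} (hK : K + 1 < N) :
    Commute (Matrix.of (Tent x xinv m) : Matrix (Fin N × Fin N) (Fin N × Fin N) R)
      (Emat R K ⊗ₖ Dinvmat x xinv m K + SPmat R m K ⊗ₖ Emat R K) := by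
  rw [Emat_eq_single hK, ← (isDiag_Dinvmat x xinv m K).diagonal_diag,
    ← (isDiag_SPmat m K).diagonal_diag]
  ext ⟨a, b⟩ ⟨e, f⟩
  simp only [Matrix.mul_add, Matrix.add_mul, Matrix.add_apply,
    Matrix.mul_single_kronecker_diagonal_apply, Matrix.mul_diagonal_kronecker_single_apply,
    Matrix.single_kronecker_diagonal_mul_apply, Matrix.diagonal_kronecker_single_mul_apply,
    Matrix.of_apply]
  exact Tent_comm_rho2E_entry x xinv hx m rfl rfl a b e f

end Rho2

theorem T_commutes_with_rho2_e_general (m n : ℕ)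
    (k : ℕ) (hk1 : 1 ≤ k) (hk2 : k ≤ m + n - 1) :
    T2 m (N := m + n)
        * (Emat 𝕂 (N := m + n) (k - 1) ⊗ₖ Dinvmat q q⁻¹ m (N := m + n) (k - 1)
            + SPmat 𝕂 m (N := m + n) (k - 1) ⊗ₖ Emat 𝕂 (N := m + n) (k - 1))
      = (Emat 𝕂 (N := m + n) (k - 1) ⊗ₖ Dinvmat q q⁻¹ m (N := m + n) (k - 1)
            + SPmat 𝕂 m (N := m + n) (k - 1) ⊗ₖ Emat 𝕂 (N := m + n) (k - 1))
        * T2 m :=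
  (commute_Tent_rho2E q q⁻¹ (mul_inv_cancel₀ RatFunc.X_ne_zero) m (by omega)).eq

/-- For every `k` with `1 ≤ k ≤ m+n−1`, the operator `T` on `V ⊗ V`
commutes with `ρ_2(e_k) = E_k ⊗ D_k⁻¹ + S^{p(k)} ⊗ E_k`. -/
theorem T_commutes_with_rho2_e (m n : ℕ) (hm : 1 ≤ m) (hn : 1 ≤ n)
    (k : ℕ) (hk1 : 1 ≤ k) (hk2 : k ≤ m + n - 1) :
    T2 m (N := m + n)
        * (Emat 𝕂 (N := m + n) (k - 1) ⊗ₖ Dinvmat q q⁻¹ m (N := m + n) (k - 1)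
            + SPmat 𝕂 m (N := m + n) (k - 1) ⊗ₖ Emat 𝕂 (N := m + n) (k - 1))
      = (Emat 𝕂 (N := m + n) (k - 1) ⊗ₖ Dinvmat q q⁻¹ m (N := m + n) (k - 1)
            + SPmat 𝕂 m (N := m + n) (k - 1) ⊗ₖ Emat 𝕂 (N := m + n) (k - 1))
        * T2 m :=
  T_commutes_with_rho2_e_general m n k hk1 hk2
end

section
/- For every k with 1 ≤ k ≤ m+n−1, the operator T on V ⊗ V commutes with ρ_2(f_k) = F_k ⊗ Id + S^{p(k)}D_k ⊗ F_k: in End_K(V ⊗ V) one has T ∘ ρ_2(f_k) = ρ_2(f_k) ∘ T. -/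
set_option synthInstance.maxHeartbeats 1000000
set_option maxHeartbeats 1000000

open scoped BigOperators Kronecker

/-!
`T` maps `v_a ⊗ v_b` into the span of `v_a ⊗ v_b` and `v_b ⊗ v_a`, so every entry of
`T ρ₂(f_k)` and of `ρ₂(f_k) T` is a combination of two entries of `ρ₂(f_k)`, which in turn is
supported on the pairs where `F_k` moves `v_k` to `v_{k+1}` in one tensor factor. Comparing
entries is then a finite case check on the positions of the indices relative to `k`, `k + 1`
and `m`.
-/

namespace HeckeRho2

variable {R : Type*} [CommRing R]

def parity (m a : ℕ) : ℕ := if a < m then 0 else 1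

/-- On 0-based indices, `T(v_a ⊗ v_b) = tDiag a b • v_a ⊗ v_b + tSwap a b • v_b ⊗ v_a`. -/
def tDiag (x xinv : R) (m a b : ℕ) : R :=
  if a = b then (if a < m then x else -xinv) else if a < b then x - xinv else 0

def tSwap (R : Type*) [CommRing R] (m a b : ℕ) : R :=
  if a = b then 0 else (-1 : R) ^ (parity m a * parity m b)

def fWeight (x xinv : R) (m k a : ℕ) : R :=
  (if k + 1 = m then (-1 : R) ^ parity m a else 1) *
    (if a = k then (if k < m then x else xinv)
     else if a = k + 1 then (if k + 1 < m then xinv else x) else 1)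

def rho2FEntry (x xinv : R) (m k a b c d : ℕ) : R :=
  (if a = k ∧ c = k + 1 ∧ b = d then 1 else 0)
    + fWeight x xinv m k a * (if a = c ∧ b = k ∧ d = k + 1 then 1 else 0)

def Tmat (x xinv : R) (m : ℕ) {N : ℕ} : Matrix (Fin N × Fin N) (Fin N × Fin N) R :=
  Matrix.of (Tent x xinv m)

def rho2F (x xinv : R) (m : ℕ) {N : ℕ} (k : ℕ) : Matrix (Fin N × Fin N) (Fin N × Fin N) R :=
  Fmat R k ⊗ₖ 1 + (SPmat R m k * Dmat x xinv m k) ⊗ₖ Fmat R k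

section Entries

variable (x xinv : R) (m : ℕ) {N : ℕ}

lemma Tent_apply_left (a b : Fin N) (p : Fin N × Fin N) :
    Tent x xinv m (a, b) p
      = (if p = (a, b) then tDiag x xinv m a b else 0)
        + (if p = (b, a) then tSwap R m a b else 0) := by
  obtain ⟨c, d⟩ := p
  simp only [Tent, tDiag, tSwap, sgn, deg, parity, Prod.mk.injEq, Fin.ext_iff]
  split_ifs <;> ring1

lemma Tent_apply_right (p : Fin N × Fin N) (c d : Fin N) :
    Tent x xinv m p (c, d)
      = (if p = (c, d) then tDiag x xinv m c d else 0)
        + (if p = (d, c) then tSwap R m d c else 0) := by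
  obtain ⟨a, b⟩ := p
  simp only [Tent, tDiag, tSwap, sgn, deg, parity, Prod.mk.injEq, Fin.ext_iff]
  split_ifs <;> first | ring1 | (exfalso; omega)

lemma Tmat_mul_apply (A : Matrix (Fin N × Fin N) (Fin N × Fin N) R) (a b : Fin N)
    (r : Fin N × Fin N) :
    (Tmat x xinv m * A : Matrix (Fin N × Fin N) (Fin N × Fin N) R) (a, b) r
      = tDiag x xinv m a b * A (a, b) r + tSwap R m a b * A (b, a) r := by
  simp only [Matrix.mul_apply, Tmat, Matrix.of_apply, Tent_apply_left, add_mul, ite_mul, zero_mul,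
    Finset.sum_add_distrib, Finset.sum_ite_eq', Finset.mem_univ, if_true]

lemma mul_Tmat_apply (A : Matrix (Fin N × Fin N) (Fin N × Fin N) R) (p : Fin N × Fin N)
    (c d : Fin N) :
    (A * Tmat x xinv m : Matrix (Fin N × Fin N) (Fin N × Fin N) R) p (c, d)
      = A p (c, d) * tDiag x xinv m c d + A p (d, c) * tSwap R m d c := by
  simp only [Matrix.mul_apply, Tmat, Matrix.of_apply, Tent_apply_right, mul_add, mul_ite,
    mul_zero, Finset.sum_add_distrib, Finset.sum_ite_eq', Finset.mem_univ, if_true]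

lemma SPmat_mul_Dmat_apply (k : ℕ) (a c : Fin N) :
    (SPmat R m k * Dmat x xinv m k : Matrix (Fin N) (Fin N) R) a c
      = if a = c then fWeight x xinv m k a else 0 := by
  have hD : ∀ b, b ≠ c → Dmat x xinv m k b c = 0 := fun b hbc => if_neg hbc
  rw [Matrix.mul_apply, Finset.sum_eq_single c (fun b _ hbc => by rw [hD b hbc, mul_zero])
    (by simp)]
  by_cases h : k + 1 = m <;>
    simp only [SPmat, h, if_true, if_false, Matrix.one_apply, Smat, Dmat, fWeight, parity, deg,
      ite_mul, one_mul, zero_mul, Fin.ext_iff] <;>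
    split_ifs <;> first | ring1 | (exfalso; omega)

lemma rho2F_apply (k : ℕ) (a b c d : Fin N) :
    rho2F x xinv m k (a, b) (c, d) = rho2FEntry x xinv m k a b c d := by
  simp only [rho2F, Matrix.add_apply, Matrix.kroneckerMap_apply, SPmat_mul_Dmat_apply, Fmat,
    Matrix.one_apply, rho2FEntry, Fin.ext_iff, ite_and, mul_ite, mul_one, mul_zero]
  split_ifs <;> ring1

end Entries

/-- Only the entries `(a, b, c, d) = (k, k, k, k + 1)` and `(k + 1, k, k + 1, k + 1)` need
`x * xinv = 1`; all others are polynomial identities in `x` and `xinv`. -/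
theorem rho2FEntry_comm {x xinv : R} (hx : x * xinv = 1) (m k a b c d : ℕ) :
    tDiag x xinv m a b * rho2FEntry x xinv m k a b c d
        + tSwap R m a b * rho2FEntry x xinv m k b a c d
      = rho2FEntry x xinv m k a b c d * tDiag x xinv m c d
        + rho2FEntry x xinv m k a b d c * tSwap R m d c := by
  by_cases h1 : a = k <;> by_cases h2 : b = k <;>
    by_cases h3 : c = k + 1 <;> by_cases h4 : d = k + 1 <;>
    simp only [rho2FEntry, tDiag, tSwap, fWeight, parity, h1, h2, h3, h4, left_eq_add,
      one_ne_zero, and_false, false_and, and_true, true_and, if_false, lt_self_iff_false,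
      if_pos, mul_zero, zero_mul, add_zero, zero_add] <;>
    split_ifs <;>
    first
      | ring1
      | (exfalso; omega)
      | linear_combination hx
      | linear_combination (-1 : R) * hx

theorem commute_Tmat_rho2F {x xinv : R} (hx : x * xinv = 1) (m : ℕ) {N : ℕ} (k : ℕ) :
    Commute (Tmat x xinv m : Matrix (Fin N × Fin N) (Fin N × Fin N) R) (rho2F x xinv m k) := by
  refine Matrix.ext fun ⟨a, b⟩ ⟨c, d⟩ => ?_
  rw [Tmat_mul_apply, mul_Tmat_apply, rho2F_apply, rho2F_apply, rho2F_apply]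
  exact rho2FEntry_comm hx m k a b c d

end HeckeRho2

theorem T_commutes_with_rho2_f_general (m n : ℕ) (k : ℕ) :
    T2 m (N := m + n)
        * (Fmat 𝕂 (N := m + n) (k - 1) ⊗ₖ (1 : Matrix (Fin (m + n)) (Fin (m + n)) 𝕂)
            + (SPmat 𝕂 m (N := m + n) (k - 1) * Dmat q q⁻¹ m (N := m + n) (k - 1))
                ⊗ₖ Fmat 𝕂 (N := m + n) (k - 1))
      = (Fmat 𝕂 (N := m + n) (k - 1) ⊗ₖ (1 : Matrix (Fin (m + n)) (Fin (m + n)) 𝕂)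
            + (SPmat 𝕂 m (N := m + n) (k - 1) * Dmat q q⁻¹ m (N := m + n) (k - 1))
                ⊗ₖ Fmat 𝕂 (N := m + n) (k - 1))
        * T2 m :=
  (HeckeRho2.commute_Tmat_rho2F (mul_inv_cancel₀ (a := q) RatFunc.X_ne_zero) m (k - 1)).eq

/-- For every `k` with `1 ≤ k ≤ m+n−1`, the operator `T` on `V ⊗ V`
commutes with `ρ_2(f_k) = F_k ⊗ Id + S^{p(k)}D_k ⊗ F_k`. -/
theorem T_commutes_with_rho2_f (m n : ℕ) (hm : 1 ≤ m) (hn : 1 ≤ n)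
    (k : ℕ) (hk1 : 1 ≤ k) (hk2 : k ≤ m + n - 1) :
    T2 m (N := m + n)
        * (Fmat 𝕂 (N := m + n) (k - 1) ⊗ₖ (1 : Matrix (Fin (m + n)) (Fin (m + n)) 𝕂)
            + (SPmat 𝕂 m (N := m + n) (k - 1) * Dmat q q⁻¹ m (N := m + n) (k - 1))
                ⊗ₖ Fmat 𝕂 (N := m + n) (k - 1))
      = (Fmat 𝕂 (N := m + n) (k - 1) ⊗ₖ (1 : Matrix (Fin (m + n)) (Fin (m + n)) 𝕂)
            + (SPmat 𝕂 m (N := m + n) (k - 1) * Dmat q q⁻¹ m (N := m + n) (k - 1))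
                ⊗ₖ Fmat 𝕂 (N := m + n) (k - 1))
        * T2 m :=
  T_commutes_with_rho2_f_general m n k
end

section
/- For every i with 1 ≤ i ≤ r−1, the Hecke operator T_i = Id^{⊗(i−1)} ⊗ T ⊗ Id^{⊗(r−i−1)} on V^{⊗r} commutes with each of the operators ρ_r(σ) = S^{⊗r}, ρ_r(q^{δ_b}) = Q_b^{⊗r} (1 ≤ b ≤ m+n), ρ_r(e_k) = Σ_{j=1}^{r} (S^{p(k)})^{⊗(j−1)} ⊗ E_k ⊗ (D_k^{−1})^{⊗(r−j)}, and ρ_r(f_k) = Σ_{j=1}^{r} (S^{p(k)}D_k)^{⊗(j−1)} ⊗ F_k ⊗ Id^{⊗(r−j)} (1 ≤ k ≤ m+n−1). -/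
set_option synthInstance.maxHeartbeats 1000000
set_option maxHeartbeats 1000000

open scoped BigOperators Kronecker

section Aux

variable {R : Type*} [CommRing R]

/-- diagonal matrix with entries `d`. -/
def diagM {N : ℕ} (d : Fin N → R) : Matrix (Fin N) (Fin N) R :=
  fun a b => if a = b then d a else 0

/-- diagonal coefficient of T -/
def td (x xinv : R) (m : ℕ) {N : ℕ} (A B : Fin N) : R :=
  if A = B then (if (A : ℕ) < m then x else -xinv)
  else if (A : ℕ) < (B : ℕ) then x - xinv else 0

/-- off-diagonal coefficient of T -/
def toff (R : Type*) [CommRing R] (m : ℕ) {N : ℕ} (A B : Fin N) : R :=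
  if A = B then 0 else sgn R m A B

lemma toff_symm (m : ℕ) {N : ℕ} (A B : Fin N) : toff R m A B = toff R m B A := by
  unfold toff sgn
  by_cases h : A = B
  · simp [h]
  · rw [if_neg h, if_neg (Ne.symm h), Nat.mul_comm]

lemma Tent_decomp (x xinv : R) (m : ℕ) {N : ℕ} (p q : Fin N × Fin N) :
    Tent x xinv m p q = td x xinv m p.1 p.2 * (if q = p then 1 else 0)
      + toff R m p.1 p.2 * (if q = (p.2, p.1) then 1 else 0) := by
  unfold Tent td toff
  by_cases h : p.1 = p.2
  · have hp : (p.2, p.1) = p := by rw [Prod.ext_iff]; exact ⟨h.symm, h⟩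
    rw [if_pos h, if_pos h, if_pos h, hp]
    ring
  · rw [if_neg h, if_neg h, if_neg h]
    by_cases h2 : (p.1 : ℕ) < (p.2 : ℕ)
    · rw [if_pos h2, if_pos h2]; ring
    · rw [if_neg h2, if_neg h2]; ring

section Sites

variable {N : ℕ} (r i0 : ℕ) (h : i0 + 1 < r)

/-- first site -/
def uu : Fin r := ⟨i0, Nat.lt_of_succ_lt h⟩
/-- second site -/
def vv : Fin r := ⟨i0 + 1, h⟩

lemma uu_ne_vv : uu r i0 h ≠ vv r i0 h := by
  simp [uu, vv, Fin.ext_iff]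

/-- swap the two sites in a configuration -/
def sw (a : Fin r → Fin N) : Fin r → Fin N :=
  a ∘ (Equiv.swap (uu r i0 h) (vv r i0 h))

lemma sw_uu (a : Fin r → Fin N) : sw r i0 h a (uu r i0 h) = a (vv r i0 h) := by
  simp [sw]

lemma sw_vv (a : Fin r → Fin N) : sw r i0 h a (vv r i0 h) = a (uu r i0 h) := by
  simp [sw]

lemma sw_other (a : Fin r → Fin N) (j : Fin r) (hj : j ≠ uu r i0 h) (hj' : j ≠ vv r i0 h) :
    sw r i0 h a j = a j := by
  simp [sw, Equiv.swap_apply_of_ne_of_ne hj hj']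

lemma sw_sw (a : Fin r → Fin N) : sw r i0 h (sw r i0 h a) = a := by
  funext j
  simp [sw, Equiv.swap_apply_self]

end Sites

end Aux
section Aux2

variable {R : Type*} [CommRing R] {N : ℕ} (r i0 : ℕ) (h : i0 + 1 < r)

lemma delta_pi (a c t : Fin r → Fin N)
    (ht : ∀ j, j ≠ uu r i0 h → j ≠ vv r i0 h → t j = a j) :
    (if (c (uu r i0 h), c (vv r i0 h)) = (t (uu r i0 h), t (vv r i0 h)) then (1 : R) else 0)
        * ∏ j ∈ Finset.univ \ ({uu r i0 h, vv r i0 h} : Finset (Fin r)),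
            (if a j = c j then (1 : R) else 0)
      = if c = t then 1 else 0 := by
  by_cases hct : c = t
  · subst hct
    rw [if_pos rfl, if_pos rfl, one_mul]
    apply Finset.prod_eq_one
    intro j hj
    rw [Finset.mem_sdiff, Finset.mem_insert, Finset.mem_singleton] at hj
    push_neg at hj
    rw [ht j hj.2.1 hj.2.2]
    simp
  · rw [if_neg hct]
    obtain ⟨j, hj⟩ : ∃ j, c j ≠ t j := by
      by_contra hc
      push_neg at hc
      exact hct (funext hc)
    by_cases hju : j = uu r i0 h
    · rw [if_neg, zero_mul]
      intro hpair
      rw [Prod.ext_iff] at hpair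
      exact hj (hju ▸ hpair.1)
    · by_cases hjv : j = vv r i0 h
      · rw [if_neg, zero_mul]
        intro hpair
        rw [Prod.ext_iff] at hpair
        exact hj (hjv ▸ hpair.2)
      · rw [Finset.prod_eq_zero (i := j), mul_zero]
        · rw [Finset.mem_sdiff, Finset.mem_insert, Finset.mem_singleton]
          exact ⟨Finset.mem_univ j, by push_neg; exact ⟨hju, hjv⟩⟩
        · rw [if_neg]
          rw [ht j hju hjv] at hj
          exact fun hh => hj hh.symm

variable (x xinv : R) (m : ℕ)

lemma heckeOp_apply (a c : Fin r → Fin N) :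
    heckeOp x xinv m r i0 h a c
      = td x xinv m (a (uu r i0 h)) (a (vv r i0 h)) * (if c = a then 1 else 0)
        + toff R m (a (uu r i0 h)) (a (vv r i0 h)) * (if c = sw r i0 h a then 1 else 0) := by
  have base : heckeOp x xinv m r i0 h a c
      = Tent x xinv m (a (uu r i0 h), a (vv r i0 h)) (c (uu r i0 h), c (vv r i0 h))
        * ∏ j ∈ Finset.univ \ ({uu r i0 h, vv r i0 h} : Finset (Fin r)),
            (if a j = c j then (1 : R) else 0) := rfl
  rw [base, Tent_decomp, add_mul, mul_assoc, mul_assoc]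
  congr 2
  · exact delta_pi r i0 h a c a (fun _ _ _ => rfl)
  · have h1 : ((a (uu r i0 h), a (vv r i0 h)).2, (a (uu r i0 h), a (vv r i0 h)).1)
        = (sw r i0 h a (uu r i0 h), sw r i0 h a (vv r i0 h)) := by
      rw [sw_uu, sw_vv]
    rw [h1]
    exact delta_pi r i0 h a c (sw r i0 h a)
      (fun j hju hjv => sw_other r i0 h a j hju hjv)

lemma heckeOp_mul_apply (X : Matrix (Fin r → Fin N) (Fin r → Fin N) R) (a b : Fin r → Fin N) :
    ((heckeOp x xinv m r i0 h * X : Matrix (Fin r → Fin N) (Fin r → Fin N) R) a b)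
      = td x xinv m (a (uu r i0 h)) (a (vv r i0 h)) * X a b
        + toff R m (a (uu r i0 h)) (a (vv r i0 h)) * X (sw r i0 h a) b := by
  rw [Matrix.mul_apply]
  simp only [heckeOp_apply r i0 h x xinv m a]
  simp only [add_mul, mul_assoc, ite_mul, one_mul, zero_mul]
  rw [Finset.sum_add_distrib]
  simp [Finset.sum_ite_eq']

lemma heckeOp_apply' (c b : Fin r → Fin N) :
    heckeOp x xinv m r i0 h c b
      = td x xinv m (b (uu r i0 h)) (b (vv r i0 h)) * (if c = b then 1 else 0)
        + toff R m (b (uu r i0 h)) (b (vv r i0 h)) * (if c = sw r i0 h b then 1 else 0) := by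
  rw [heckeOp_apply]
  congr 1
  · by_cases hc : c = b
    · subst hc; simp
    · rw [if_neg (fun hh : b = c => hc hh.symm), if_neg hc, mul_zero, mul_zero]
  · by_cases hc : c = sw r i0 h b
    · have hb : b = sw r i0 h c := by rw [hc, sw_sw]
      rw [if_pos hb, if_pos hc, hc, sw_uu, sw_vv, toff_symm]
    · have hb : b ≠ sw r i0 h c := by
        intro hh
        exact hc (by rw [hh, sw_sw])
      rw [if_neg hb, if_neg hc, mul_zero, mul_zero]

lemma mul_heckeOp_apply (X : Matrix (Fin r → Fin N) (Fin r → Fin N) R) (a b : Fin r → Fin N) :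
    ((X * heckeOp x xinv m r i0 h : Matrix (Fin r → Fin N) (Fin r → Fin N) R) a b)
      = td x xinv m (b (uu r i0 h)) (b (vv r i0 h)) * X a b
        + toff R m (b (uu r i0 h)) (b (vv r i0 h)) * X a (sw r i0 h b) := by
  rw [Matrix.mul_apply]
  simp only [heckeOp_apply' r i0 h x xinv m _ b]
  simp only [mul_add, mul_ite, mul_one, mul_zero, ite_mul, zero_mul]
  rw [Finset.sum_add_distrib]
  simp only [Finset.sum_ite_eq', Finset.mem_univ, if_true]
  ring

lemma comm_criterion (X : Matrix (Fin r → Fin N) (Fin r → Fin N) R)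
    (hX : ∀ a b, td x xinv m (a (uu r i0 h)) (a (vv r i0 h)) * X a b
        + toff R m (a (uu r i0 h)) (a (vv r i0 h)) * X (sw r i0 h a) b
      = td x xinv m (b (uu r i0 h)) (b (vv r i0 h)) * X a b
        + toff R m (b (uu r i0 h)) (b (vv r i0 h)) * X a (sw r i0 h b)) :
    heckeOp x xinv m r i0 h * X = X * heckeOp x xinv m r i0 h := by
  ext a b
  rw [heckeOp_mul_apply, mul_heckeOp_apply]
  exact hX a b

end Aux2
section Aux3

variable {R : Type*} [CommRing R] {N : ℕ} (r i0 : ℕ) (h : i0 + 1 < r)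

lemma kron_split (M : Fin r → Matrix (Fin N) (Fin N) R) (a b : Fin r → Fin N) :
    kron M a b = (M (uu r i0 h) (a (uu r i0 h)) (b (uu r i0 h))
        * M (vv r i0 h) (a (vv r i0 h)) (b (vv r i0 h)))
      * ∏ j ∈ Finset.univ \ ({uu r i0 h, vv r i0 h} : Finset (Fin r)),
          M j (a j) (b j) := by
  unfold kron
  rw [← Finset.prod_sdiff (Finset.subset_univ ({uu r i0 h, vv r i0 h} : Finset (Fin r))),
    Finset.prod_pair (uu_ne_vv r i0 h)]
  ring

lemma outer_sw_left (M : Fin r → Matrix (Fin N) (Fin N) R) (a b : Fin r → Fin N) :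
    (∏ j ∈ Finset.univ \ ({uu r i0 h, vv r i0 h} : Finset (Fin r)),
        M j (sw r i0 h a j) (b j))
      = ∏ j ∈ Finset.univ \ ({uu r i0 h, vv r i0 h} : Finset (Fin r)), M j (a j) (b j) := by
  apply Finset.prod_congr rfl
  intro j hj
  rw [Finset.mem_sdiff, Finset.mem_insert, Finset.mem_singleton] at hj
  push_neg at hj
  rw [sw_other r i0 h a j hj.2.1 hj.2.2]

lemma outer_sw_right (M : Fin r → Matrix (Fin N) (Fin N) R) (a b : Fin r → Fin N) :
    (∏ j ∈ Finset.univ \ ({uu r i0 h, vv r i0 h} : Finset (Fin r)),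
        M j (a j) (sw r i0 h b j))
      = ∏ j ∈ Finset.univ \ ({uu r i0 h, vv r i0 h} : Finset (Fin r)), M j (a j) (b j) := by
  apply Finset.prod_congr rfl
  intro j hj
  rw [Finset.mem_sdiff, Finset.mem_insert, Finset.mem_singleton] at hj
  push_neg at hj
  rw [sw_other r i0 h b j hj.2.1 hj.2.2]

variable (x xinv : R) (m : ℕ)

lemma kron_comm_of_local (M : Fin r → Matrix (Fin N) (Fin N) R)
    (hloc : ∀ A B C D : Fin N,
      td x xinv m A B * (M (uu r i0 h) A C * M (vv r i0 h) B D)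
        + toff R m A B * (M (uu r i0 h) B C * M (vv r i0 h) A D)
      = td x xinv m C D * (M (uu r i0 h) A C * M (vv r i0 h) B D)
        + toff R m C D * (M (uu r i0 h) A D * M (vv r i0 h) B C)) :
    heckeOp x xinv m r i0 h * kron M = kron M * heckeOp x xinv m r i0 h := by
  apply comm_criterion
  intro a b
  rw [kron_split r i0 h M a b, kron_split r i0 h M (sw r i0 h a) b,
    kron_split r i0 h M a (sw r i0 h b), sw_uu r i0 h a, sw_vv r i0 h a,
    sw_uu r i0 h b, sw_vv r i0 h b, outer_sw_left, outer_sw_right]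
  have := hloc (a (uu r i0 h)) (a (vv r i0 h)) (b (uu r i0 h)) (b (vv r i0 h))
  linear_combination (∏ j ∈ Finset.univ \ ({uu r i0 h, vv r i0 h} : Finset (Fin r)),
    M j (a j) (b j)) * this

lemma kron2_comm_of_local (M M' : Fin r → Matrix (Fin N) (Fin N) R)
    (houter : ∀ j : Fin r, j ≠ uu r i0 h → j ≠ vv r i0 h → M j = M' j)
    (hloc : ∀ A B C D : Fin N,
      td x xinv m A B * (M (uu r i0 h) A C * M (vv r i0 h) B D
            + M' (uu r i0 h) A C * M' (vv r i0 h) B D)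
        + toff R m A B * (M (uu r i0 h) B C * M (vv r i0 h) A D
            + M' (uu r i0 h) B C * M' (vv r i0 h) A D)
      = td x xinv m C D * (M (uu r i0 h) A C * M (vv r i0 h) B D
            + M' (uu r i0 h) A C * M' (vv r i0 h) B D)
        + toff R m C D * (M (uu r i0 h) A D * M (vv r i0 h) B C
            + M' (uu r i0 h) A D * M' (vv r i0 h) B C)) :
    heckeOp x xinv m r i0 h * (kron M + kron M')
      = (kron M + kron M') * heckeOp x xinv m r i0 h := by
  apply comm_criterion
  intro a b
  have hOuter : (∏ j ∈ Finset.univ \ ({uu r i0 h, vv r i0 h} : Finset (Fin r)),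
      M' j (a j) (b j)) = ∏ j ∈ Finset.univ \ ({uu r i0 h, vv r i0 h} : Finset (Fin r)),
      M j (a j) (b j) := by
    apply Finset.prod_congr rfl
    intro j hj
    rw [Finset.mem_sdiff, Finset.mem_insert, Finset.mem_singleton] at hj
    push_neg at hj
    rw [houter j hj.2.1 hj.2.2]
  simp only [Matrix.add_apply]
  rw [kron_split r i0 h M a b, kron_split r i0 h M (sw r i0 h a) b,
    kron_split r i0 h M a (sw r i0 h b),
    kron_split r i0 h M' a b, kron_split r i0 h M' (sw r i0 h a) b,
    kron_split r i0 h M' a (sw r i0 h b), sw_uu r i0 h a, sw_vv r i0 h a,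
    sw_uu r i0 h b, sw_vv r i0 h b,
    outer_sw_left, outer_sw_right, outer_sw_left, outer_sw_right, hOuter]
  have := hloc (a (uu r i0 h)) (a (vv r i0 h)) (b (uu r i0 h)) (b (vv r i0 h))
  linear_combination (∏ j ∈ Finset.univ \ ({uu r i0 h, vv r i0 h} : Finset (Fin r)),
    M j (a j) (b j)) * this

lemma scalar_diag (d : Fin N → R) (A B C D : Fin N) :
    td x xinv m A B * (diagM d A C * diagM d B D)
      + toff R m A B * (diagM d B C * diagM d A D)
    = td x xinv m C D * (diagM d A C * diagM d B D)
      + toff R m C D * (diagM d A D * diagM d B C) := by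
  unfold diagM
  by_cases h3 : B = C
  · by_cases h4 : A = D
    · subst h3; subst h4
      by_cases h1 : A = B
      · subst h1; ring
      · rw [toff_symm (R := R) m B A]
        simp [h1, fun hh : B = A => h1 hh.symm]
        try ring
    · by_cases h1 : A = C
      · by_cases h2 : B = D
        · subst h1; subst h2; ring
        · subst h1; subst h3; simp [h2, h4]
      · simp [h1, h4]
  · by_cases h1 : A = C
    · by_cases h2 : B = D
      · subst h1; subst h2; ring
      · subst h1; simp [h2, h3]
    · simp [h1, h3]

lemma kron_comm_diag (M : Fin r → Matrix (Fin N) (Fin N) R) (d : Fin N → R)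
    (hu : M (uu r i0 h) = diagM d) (hv : M (vv r i0 h) = diagM d) :
    heckeOp x xinv m r i0 h * kron M = kron M * heckeOp x xinv m r i0 h := by
  apply kron_comm_of_local
  intro A B C D
  rw [hu, hv]
  exact scalar_diag x xinv m d A B C D

end Aux3
section Aux4

variable {R : Type*} [CommRing R] {N : ℕ}

/-- diagonal entries of `Dinvmat` -/
def dvf (x xinv : R) (m k : ℕ) : Fin N → R := fun a =>
  if (a : ℕ) = k then (if k < m then xinv else x)
  else if (a : ℕ) = k + 1 then (if k + 1 < m then x else xinv) else 1

/-- diagonal entries of `Dmat` -/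
def dval (x xinv : R) (m k : ℕ) : Fin N → R := fun a =>
  if (a : ℕ) = k then (if k < m then x else xinv)
  else if (a : ℕ) = k + 1 then (if k + 1 < m then xinv else x) else 1

/-- diagonal entries of `SPmat` -/
def spf (R : Type*) [CommRing R] (m k : ℕ) : Fin N → R := fun a =>
  if k + 1 = m then (-1 : R) ^ deg m a else 1

lemma Smat_diag (m : ℕ) : (Smat R m : Matrix (Fin N) (Fin N) R)
    = diagM (fun a => (-1 : R) ^ deg m a) := rfl

lemma Qmat_diag (x : R) (b0 : Fin N) : Qmat x b0 = diagM (fun a => if a = b0 then x else 1) := rfl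

lemma one_diag : (1 : Matrix (Fin N) (Fin N) R) = diagM (fun _ => (1 : R)) := by
  ext a b
  simp [diagM, Matrix.one_apply]

lemma Dinvmat_diag (x xinv : R) (m k : ℕ) :
    (Dinvmat x xinv m k : Matrix (Fin N) (Fin N) R) = diagM (dvf x xinv m k) := rfl

lemma Dmat_diag (x xinv : R) (m k : ℕ) :
    (Dmat x xinv m k : Matrix (Fin N) (Fin N) R) = diagM (dval x xinv m k) := rfl

lemma SPmat_diag (m k : ℕ) :
    (SPmat R m k : Matrix (Fin N) (Fin N) R) = diagM (spf R m k) := by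
  unfold SPmat spf
  by_cases hk : k + 1 = m
  · simp only [hk, if_pos rfl]
    exact Smat_diag m
  · simp only [if_neg hk]
    exact one_diag

lemma diagM_mul (d e : Fin N → R) :
    diagM d * diagM e = diagM (fun a => d a * e a) := by
  ext a b
  rw [Matrix.mul_apply]
  simp only [diagM, ite_mul, zero_mul]
  rw [Finset.sum_eq_single a]
  · by_cases hab : a = b <;> simp [hab]
  · intro c _ hca
    rw [if_neg (fun hh : a = c => hca hh.symm)]
  · intro hc
    exact absurd (Finset.mem_univ a) hc

lemma SPD_diag (x xinv : R) (m k : ℕ) :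
    (SPmat R m k * Dmat x xinv m k : Matrix (Fin N) (Fin N) R)
      = diagM (fun a => spf R m k a * dval x xinv m k a) := by
  rw [SPmat_diag, Dmat_diag, diagM_mul]

variable (r i0 : ℕ) (h : i0 + 1 < r) (x xinv : R) (m : ℕ)

lemma comm_sigma :
    heckeOp x xinv m r i0 h * rhoSigma R m r
      = (rhoSigma R m r : Matrix (Fin r → Fin N) (Fin r → Fin N) R)
        * heckeOp x xinv m r i0 h := by
  unfold rhoSigma
  exact kron_comm_diag r i0 h x xinv m _ _ (Smat_diag m) (Smat_diag m)

lemma comm_Q (y : R) (b0 : Fin N) :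
    heckeOp x xinv m r i0 h * rhoQ y r b0
      = (rhoQ y r b0 : Matrix (Fin r → Fin N) (Fin r → Fin N) R) * heckeOp x xinv m r i0 h := by
  unfold rhoQ
  exact kron_comm_diag r i0 h x xinv m _ _ (Qmat_diag y b0) (Qmat_diag y b0)

end Aux4
section Aux5

variable {R : Type*} [CommRing R] {N : ℕ} (r i0 : ℕ) (h : i0 + 1 < r) (x xinv : R) (m : ℕ)

set_option maxHeartbeats 4000000 in
lemma scalar_E (k : ℕ) (hx : x * xinv = 1) (A B C D : Fin N) :
    td x xinv m A B * (Emat R k A C * diagM (dvf x xinv m k) B D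
          + diagM (spf R m k) A C * Emat R k B D)
      + toff R m A B * (Emat R k B C * diagM (dvf x xinv m k) A D
          + diagM (spf R m k) B C * Emat R k A D)
    = td x xinv m C D * (Emat R k A C * diagM (dvf x xinv m k) B D
          + diagM (spf R m k) A C * Emat R k B D)
      + toff R m C D * (Emat R k A D * diagM (dvf x xinv m k) B C
          + diagM (spf R m k) A D * Emat R k B C) := by
  by_cases hA : (A : ℕ) = k + 1 <;> by_cases hB : (B : ℕ) = k + 1 <;>
    by_cases hC : (C : ℕ) = k <;> by_cases hD : (D : ℕ) = k <;>
    simp only [td, toff, Emat, diagM, dvf, spf, sgn, deg, Fin.ext_iff] <;>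
    simp only [hA, hB, hC, hD] <;>
    simp <;>
    split_ifs <;>
    first
      | rfl
      | (exfalso; omega)
      | ring1
      | linear_combination hx
      | linear_combination -hx
      | linear_combination x * hx
      | linear_combination -x * hx
      | linear_combination xinv * hx
      | linear_combination -xinv * hx
      | linear_combination (x + xinv) * hx
      | linear_combination (x - xinv) * hx
      | linear_combination -(x + xinv) * hx

set_option maxHeartbeats 4000000 in
lemma scalar_F (k : ℕ) (hx : x * xinv = 1) (A B C D : Fin N) :
    td x xinv m A B * (Fmat R k A C * diagM (fun _ => (1 : R)) B D
          + diagM (fun a => spf R m k a * dval x xinv m k a) A C * Fmat R k B D)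
      + toff R m A B * (Fmat R k B C * diagM (fun _ => (1 : R)) A D
          + diagM (fun a => spf R m k a * dval x xinv m k a) B C * Fmat R k A D)
    = td x xinv m C D * (Fmat R k A C * diagM (fun _ => (1 : R)) B D
          + diagM (fun a => spf R m k a * dval x xinv m k a) A C * Fmat R k B D)
      + toff R m C D * (Fmat R k A D * diagM (fun _ => (1 : R)) B C
          + diagM (fun a => spf R m k a * dval x xinv m k a) A D * Fmat R k B C) := by
  by_cases hA : (A : ℕ) = k <;> by_cases hB : (B : ℕ) = k <;>
    by_cases hC : (C : ℕ) = k + 1 <;> by_cases hD : (D : ℕ) = k + 1 <;>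
    simp only [td, toff, Fmat, diagM, dval, spf, sgn, deg, Fin.ext_iff] <;>
    simp only [hA, hB, hC, hD] <;>
    simp <;>
    split_ifs <;>
    first
      | rfl
      | (exfalso; omega)
      | ring1
      | linear_combination hx
      | linear_combination -hx
      | linear_combination x * hx
      | linear_combination -x * hx
      | linear_combination xinv * hx
      | linear_combination -xinv * hx
      | linear_combination (x + xinv) * hx
      | linear_combination (x - xinv) * hx
      | linear_combination -(x + xinv) * hx

lemma comm_E (k : ℕ) (hx : x * xinv = 1) :
    heckeOp x xinv m r i0 h * rhoE x xinv m r k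
      = (rhoE x xinv m r k : Matrix (Fin r → Fin N) (Fin r → Fin N) R)
          * heckeOp x xinv m r i0 h := by
  unfold rhoE
  rw [Matrix.mul_sum, Matrix.sum_mul]
  have hsub : ({uu r i0 h, vv r i0 h} : Finset (Fin r)) ⊆ Finset.univ := Finset.subset_univ _
  rw [← Finset.sum_sdiff hsub, ← Finset.sum_sdiff hsub]
  congr 1
  · apply Finset.sum_congr rfl
    intro p hp
    rw [Finset.mem_sdiff, Finset.mem_insert, Finset.mem_singleton] at hp
    push_neg at hp
    obtain ⟨-, hpu, hpv⟩ := hp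
    have hval : (p : ℕ) ≠ i0 := fun hh => hpu (Fin.ext (by simpa [uu] using hh.symm)).symm
    have hval' : (p : ℕ) ≠ i0 + 1 := fun hh => hpv (Fin.ext (by simpa [vv] using hh.symm)).symm
    rcases Nat.lt_or_ge (p : ℕ) i0 with hlt | hge
    · -- p below both sites: both sites get Dinvmat
      have h1 : ¬ (uu r i0 h < p) := by rw [Fin.lt_def]; simp only [uu]; omega
      have h2 : (uu r i0 h) ≠ p := by
        intro hh; apply hval; rw [← hh]; rfl
      have h3 : ¬ (vv r i0 h < p) := by rw [Fin.lt_def]; simp only [vv]; omega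
      have h4 : (vv r i0 h) ≠ p := by
        intro hh; apply hval'; rw [← hh]; rfl
      apply kron_comm_diag r i0 h x xinv m _ (dvf x xinv m k)
      · rw [if_neg h1, if_neg h2]; exact Dinvmat_diag x xinv m k
      · rw [if_neg h3, if_neg h4]; exact Dinvmat_diag x xinv m k
    · -- p above both sites: both sites get SPmat
      have hgt : i0 + 1 < (p : ℕ) := by omega
      have h1 : uu r i0 h < p := by rw [Fin.lt_def]; simp only [uu]; omega
      have h3 : vv r i0 h < p := by rw [Fin.lt_def]; simp only [vv]; omega
      apply kron_comm_diag r i0 h x xinv m _ (spf R m k)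
      · rw [if_pos h1]; exact SPmat_diag m k
      · rw [if_pos h3]; exact SPmat_diag m k
  · rw [Finset.sum_pair (uu_ne_vv r i0 h), Finset.sum_pair (uu_ne_vv r i0 h)]
    have huv : uu r i0 h < vv r i0 h := by rw [Fin.lt_def]; simp [uu, vv]
    have key := kron2_comm_of_local (N := N) r i0 h x xinv m
      (fun j => if j < uu r i0 h then SPmat R m k else if j = uu r i0 h then Emat R k
        else Dinvmat x xinv m k)
      (fun j => if j < vv r i0 h then SPmat R m k else if j = vv r i0 h then Emat R k
        else Dinvmat x xinv m k)
      (by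
        intro j hju hjv
        by_cases hj : j < uu r i0 h
        · have hj' : j < vv r i0 h := lt_trans hj huv
          rw [if_pos hj, if_pos hj']
        · have hj2 : ¬ j < vv r i0 h := by
            rw [Fin.lt_def] at hj ⊢
            simp only [uu] at hj
            simp only [vv]
            have : (j : ℕ) ≠ i0 := fun hh => hju (by apply Fin.ext; simpa [uu] using hh)
            omega
          rw [if_neg hj, if_neg hj2, if_neg hju, if_neg hjv])
      (by
        intro A B C D
        have hvu : ¬ (vv r i0 h < uu r i0 h) := fun hh => absurd (lt_trans hh huv) (lt_irrefl _)
        have hne : vv r i0 h ≠ uu r i0 h := Ne.symm (uu_ne_vv r i0 h)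
        simp only [lt_self_iff_false, if_false, if_true, if_pos huv, if_neg hvu, if_neg hne,
          Dinvmat_diag, SPmat_diag]
        exact scalar_E x xinv m k hx A B C D)
    rw [Matrix.mul_add, Matrix.add_mul] at key
    exact key

lemma comm_F (k : ℕ) (hx : x * xinv = 1) :
    heckeOp x xinv m r i0 h * rhoF x xinv m r k
      = (rhoF x xinv m r k : Matrix (Fin r → Fin N) (Fin r → Fin N) R)
          * heckeOp x xinv m r i0 h := by
  unfold rhoF
  rw [Matrix.mul_sum, Matrix.sum_mul]
  have hsub : ({uu r i0 h, vv r i0 h} : Finset (Fin r)) ⊆ Finset.univ := Finset.subset_univ _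
  rw [← Finset.sum_sdiff hsub, ← Finset.sum_sdiff hsub]
  congr 1
  · apply Finset.sum_congr rfl
    intro p hp
    rw [Finset.mem_sdiff, Finset.mem_insert, Finset.mem_singleton] at hp
    push_neg at hp
    obtain ⟨-, hpu, hpv⟩ := hp
    have hval : (p : ℕ) ≠ i0 := fun hh => hpu (Fin.ext (by simpa [uu] using hh.symm)).symm
    have hval' : (p : ℕ) ≠ i0 + 1 := fun hh => hpv (Fin.ext (by simpa [vv] using hh.symm)).symm
    rcases Nat.lt_or_ge (p : ℕ) i0 with hlt | hge
    · have h1 : ¬ (uu r i0 h < p) := by rw [Fin.lt_def]; simp only [uu]; omega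
      have h2 : (uu r i0 h) ≠ p := by
        intro hh; apply hval; rw [← hh]; rfl
      have h3 : ¬ (vv r i0 h < p) := by rw [Fin.lt_def]; simp only [vv]; omega
      have h4 : (vv r i0 h) ≠ p := by
        intro hh; apply hval'; rw [← hh]; rfl
      apply kron_comm_diag r i0 h x xinv m _ (fun _ => (1 : R))
      · rw [if_neg h1, if_neg h2]; exact one_diag
      · rw [if_neg h3, if_neg h4]; exact one_diag
    · have h1 : uu r i0 h < p := by rw [Fin.lt_def]; simp only [uu]; omega
      have h3 : vv r i0 h < p := by rw [Fin.lt_def]; simp only [vv]; omega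
      apply kron_comm_diag r i0 h x xinv m _
        (fun a => spf R m k a * dval x xinv m k a)
      · rw [if_pos h1]; exact SPD_diag x xinv m k
      · rw [if_pos h3]; exact SPD_diag x xinv m k
  · rw [Finset.sum_pair (uu_ne_vv r i0 h), Finset.sum_pair (uu_ne_vv r i0 h)]
    have huv : uu r i0 h < vv r i0 h := by rw [Fin.lt_def]; simp [uu, vv]
    have key := kron2_comm_of_local (N := N) r i0 h x xinv m
      (fun j => if j < uu r i0 h then SPmat R m k * Dmat x xinv m k
        else if j = uu r i0 h then Fmat R k else 1)
      (fun j => if j < vv r i0 h then SPmat R m k * Dmat x xinv m k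
        else if j = vv r i0 h then Fmat R k else 1)
      (by
        intro j hju hjv
        by_cases hj : j < uu r i0 h
        · have hj' : j < vv r i0 h := lt_trans hj huv
          rw [if_pos hj, if_pos hj']
        · have hj2 : ¬ j < vv r i0 h := by
            rw [Fin.lt_def] at hj ⊢
            simp only [uu] at hj
            simp only [vv]
            have : (j : ℕ) ≠ i0 := fun hh => hju (by apply Fin.ext; simpa [uu] using hh)
            omega
          rw [if_neg hj, if_neg hj2, if_neg hju, if_neg hjv])
      (by
        intro A B C D
        have hvu : ¬ (vv r i0 h < uu r i0 h) := fun hh => absurd (lt_trans hh huv) (lt_irrefl _)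
        have hne : vv r i0 h ≠ uu r i0 h := Ne.symm (uu_ne_vv r i0 h)
        simp only [lt_self_iff_false, if_false, if_true, if_pos huv, if_neg hvu, if_neg hne,
          SPD_diag, one_diag]
        exact scalar_F x xinv m k hx A B C D)
    rw [Matrix.mul_add, Matrix.add_mul] at key
    exact key

end Aux5

/-- For every `i` with `1 ≤ i ≤ r−1`, the Hecke operator
`T_i = Id^{⊗(i−1)} ⊗ T ⊗ Id^{⊗(r−i−1)}` on `V^{⊗ r}` commutes with each of
`ρ_r(σ)`, `ρ_r(q^{δ_b})` (`1 ≤ b ≤ m+n`), `ρ_r(e_k)` and `ρ_r(f_k)`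
(`1 ≤ k ≤ m+n−1`). -/
theorem hecke_commutes_with_rho (m n r : ℕ) (hm : 1 ≤ m) (hn : 1 ≤ n) (hr : 2 ≤ r)
    (i : ℕ) (hi1 : 1 ≤ i) (hi2 : i ≤ r - 1) :
    (heckeOp q q⁻¹ m (N := m + n) r (i - 1) (by omega) * rhoSigma 𝕂 m r = rhoSigma 𝕂 m r * heckeOp q q⁻¹ m (N := m + n) r (i - 1) (by omega))
    ∧ (∀ (b : ℕ) (hb1 : 1 ≤ b) (hb2 : b ≤ m + n),
        heckeOp q q⁻¹ m (N := m + n) r (i - 1) (by omega) * rhoQ q r (⟨b - 1, by omega⟩ : Fin (m + n))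
          = rhoQ q r (⟨b - 1, by omega⟩ : Fin (m + n)) * heckeOp q q⁻¹ m (N := m + n) r (i - 1) (by omega))
    ∧ (∀ (k : ℕ) (hk1 : 1 ≤ k) (hk2 : k ≤ m + n - 1),
        heckeOp q q⁻¹ m (N := m + n) r (i - 1) (by omega) * rhoE q q⁻¹ m r (k - 1) = rhoE q q⁻¹ m r (k - 1) * heckeOp q q⁻¹ m (N := m + n) r (i - 1) (by omega))
    ∧ (∀ (k : ℕ) (hk1 : 1 ≤ k) (hk2 : k ≤ m + n - 1),
        heckeOp q q⁻¹ m (N := m + n) r (i - 1) (by omega) * rhoF q q⁻¹ m r (k - 1) = rhoF q q⁻¹ m r (k - 1) * heckeOp q q⁻¹ m (N := m + n) r (i - 1) (by omega)) := by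
  have hx : q * q⁻¹ = 1 := mul_inv_cancel₀ RatFunc.X_ne_zero
  refine ⟨?_, ?_, ?_, ?_⟩
  · exact comm_sigma r (i - 1) (by omega) q q⁻¹ m
  · intro b _ hb2
    exact comm_Q r (i - 1) (by omega) q q⁻¹ m q _
  · intro k _ _
    exact comm_E r (i - 1) (by omega) q q⁻¹ m (k - 1) hx
  · intro k _ _
    exact comm_F r (i - 1) (by omega) q q⁻¹ m (k - 1) hx
end
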